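/- arXiv:2510.12767 — 4 statements merged into one kernel-verified Lean document; each statement's English description precedes it below -/
import Mathlib

section
/- If A is a subset of a finite abelian group G and H is a subgroup of G such that every element of H is in the ε-stabilizer of A (i.e., |A Δ (A+h)| ≤ ε|G| for all h ∈ H), then there exists a union Y of cosets of H such that |A Δ Y| ≤ ε|G|. -/
open Finset

/-- If every element of a subgroup `H` is in the ε-stabilizer of `A`, then `A` is within
`ε|G|` of a union of cosets of `H`. -/
theorem stmt_0 {G : Type*} [AddCommGroup G] [Fintype G] [DecidableEq G]
    (A : Finset G) (H : AddSubgroup G) [DecidablePred (· ∈ H)] (ε : ℝ) (hε : 0 < ε)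
    (hstab : ∀ h ∈ H, ((symmDiff A (A.image (· + h))).card : ℝ) ≤ ε * Fintype.card G) :
    ∃ T : Finset G,
      ((symmDiff A (T.biUnion (fun g => Finset.univ.filter (fun x => x - g ∈ H)))).card : ℝ)
        ≤ ε * Fintype.card G := by
  classical
  haveI : Fintype (G ⧸ H) := Fintype.ofFinite _
  set Q := G ⧸ H with hQ
  let mk : G → Q := QuotientAddGroup.mk
  let HF : Finset G := univ.filter (· ∈ H)
  let m : ℕ := HF.card
  let μ : Q → ℕ := fun q => (A.filter (fun x => mk x = q)).card
  let T : Finset G := univ.filter (fun x => m < 2 * μ (mk x))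
  have hHF : ∀ h : G, h ∈ HF ↔ h ∈ H := by intro h; simp [HF]
  -- basic coset facts
  have hmkeq : ∀ x g : G, mk x = mk g ↔ x - g ∈ H := by
    intro x g
    rw [show mk x = mk g ↔ -x + g ∈ H from QuotientAddGroup.eq,
      show -x + g = -(x - g) by abel, neg_mem_iff]
  -- Y = T
  have hYT : T.biUnion (fun g => univ.filter (fun x => x - g ∈ H)) = T := by
    ext x
    simp only [mem_biUnion, mem_filter, mem_univ, true_and, T]
    constructor
    · rintro ⟨g, hg, hx⟩
      rwa [show μ (mk x) = μ (mk g) by rw [(hmkeq x g).2 hx]]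
    · intro hx
      exact ⟨x, hx, by simpa using H.zero_mem⟩
  -- fibers of mk are cosets of cardinality m
  have hCq : ∀ q : Q, (univ.filter (fun x => mk x = q)).card = m := by
    intro q
    obtain ⟨g, rfl⟩ := QuotientAddGroup.mk_surjective q
    have himg : univ.filter (fun x => mk x = mk g) = HF.image (g + ·) := by
      ext x
      simp only [mem_filter, mem_univ, true_and, mem_image, HF]
      constructor
      · intro hx
        exact ⟨x - g, by simp [(hmkeq x g).1 hx], by abel⟩
      · rintro ⟨h, hh, rfl⟩
        exact (hmkeq _ _).2 (by simpa using hh)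
    rw [himg, card_image_of_injective _ (add_right_injective g)]
  have hμle : ∀ q : Q, μ q ≤ m := by
    intro q
    rw [← hCq q]
    exact card_le_card (fun x hx => by
      simp only [mem_filter, mem_univ, true_and]
      exact (mem_filter.1 hx).2)
  -- fiber of A Δ T
  have hfibAT : ∀ q : Q, ((symmDiff A T).filter (fun x => mk x = q)).card
      = if m < 2 * μ q then m - μ q else μ q := by
    intro q
    by_cases hlt : m < 2 * μ q
    · rw [if_pos hlt]
      have heq : (symmDiff A T).filter (fun x => mk x = q)
          = (univ.filter (fun x => mk x = q)) \ (A.filter (fun x => mk x = q)) := by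
        ext x
        by_cases hq : mk x = q
        · simp only [mem_filter, mem_sdiff, mem_univ, true_and, Finset.mem_symmDiff, T, hq,
            and_true]
          tauto
        · simp [hq]
      rw [heq, card_sdiff_of_subset (filter_subset_filter _ (subset_univ A)), hCq]
    · rw [if_neg hlt]
      have heq : (symmDiff A T).filter (fun x => mk x = q) = A.filter (fun x => mk x = q) := by
        ext x
        by_cases hq : mk x = q
        · simp only [mem_filter, mem_univ, true_and, Finset.mem_symmDiff, T, hq, and_true]
          tauto
        · simp [hq]
      rw [heq]
  -- fiberwise count of the stabilizer sums
  have hfibsum : ∀ q : Q,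
      (∑ h ∈ HF, ((symmDiff A (A.image (· + h))).filter (fun x => mk x = q)).card)
        = μ q * (m - μ q) + (m - μ q) * μ q := by
    intro q
    have hmemim : ∀ (x h : G), x ∈ A.image (· + h) ↔ x - h ∈ A := by
      intro x h
      simp only [mem_image]
      constructor
      · rintro ⟨a, ha, rfl⟩; simpa using ha
      · intro hx; exact ⟨x - h, hx, by abel⟩
    set Cq : Finset G := univ.filter (fun x => mk x = q) with hCqdef
    have hCA : (Cq.filter (· ∈ A)).card = μ q := by
      congr 1
      ext x
      simp only [mem_filter, mem_univ, true_and, Cq, μ]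
      tauto
    have hCA' : (Cq.filter (· ∉ A)).card = m - μ q := by
      have := Finset.card_filter_add_card_filter_not (s := Cq) (p := (· ∈ A))
      rw [hCA, hCq] at this
      omega
    -- each fiber card as filter over the coset
    have h1 : ∀ h : G, ((symmDiff A (A.image (· + h))).filter (fun x => mk x = q)).card
        = (Cq.filter (fun x => (x ∈ A ∧ x - h ∉ A) ∨ (x - h ∈ A ∧ x ∉ A))).card := by
      intro h
      congr 1
      ext x
      simp only [mem_filter, mem_univ, true_and, Finset.mem_symmDiff, hmemim, Cq]
      tauto
    calc (∑ h ∈ HF, ((symmDiff A (A.image (· + h))).filter (fun x => mk x = q)).card)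
        = ∑ h ∈ HF, ∑ x ∈ Cq,
            (if (x ∈ A ∧ x - h ∉ A) ∨ (x - h ∈ A ∧ x ∉ A) then 1 else 0) := by
          refine Finset.sum_congr rfl fun h _ => ?_
          rw [h1 h, Finset.card_filter]
      _ = ∑ x ∈ Cq, ∑ h ∈ HF,
            (if (x ∈ A ∧ x - h ∉ A) ∨ (x - h ∈ A ∧ x ∉ A) then 1 else 0) :=
          Finset.sum_comm
      _ = ∑ x ∈ Cq, (if x ∈ A then m - μ q else μ q) := by
          refine Finset.sum_congr rfl fun x hx => ?_
          have hxq : mk x = q := by simpa [Cq] using hx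
          rw [← Finset.card_filter]
          have hbij : (HF.filter (fun h => (x ∈ A ∧ x - h ∉ A) ∨ (x - h ∈ A ∧ x ∉ A))).card
              = (Cq.filter (fun y => (x ∈ A ∧ y ∉ A) ∨ (y ∈ A ∧ x ∉ A))).card := by
            refine Finset.card_bij (fun h _ => x - h) ?_ ?_ ?_
            · intro h hh
              rw [mem_filter] at hh ⊢
              refine ⟨?_, hh.2⟩
              simp only [Cq, mem_filter, mem_univ, true_and]
              rw [show q = mk x from hxq.symm, hmkeq]
              have : h ∈ H := (hHF h).1 hh.1
              simpa using H.neg_mem this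
            · intro h1' hh1 h2' hh2 heq
              exact sub_right_injective heq
            · intro y hy
              rw [mem_filter] at hy
              have hyq : mk y = q := by simpa [Cq] using hy.1
              refine ⟨x - y, ?_, sub_sub_cancel x y⟩
              rw [mem_filter]
              constructor
              · rw [hHF]
                have : y - x ∈ H := (hmkeq y x).1 (hyq.trans hxq.symm)
                simpa using H.neg_mem this
              · simpa using hy.2
          rw [hbij]
          by_cases hxA : x ∈ A
          · rw [if_pos hxA, ← hCA']
            apply congrArg
            ext y
            simp [hxA]
          · rw [if_neg hxA, ← hCA]
            apply congrArg
            ext y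
            simp [hxA]
      _ = μ q * (m - μ q) + (m - μ q) * μ q := by
          rw [Finset.sum_ite, Finset.sum_const, Finset.sum_const, hCA, hCA', smul_eq_mul,
            smul_eq_mul]
  -- the key counting inequality
  have key : m * (symmDiff A T).card ≤ ∑ h ∈ HF, (symmDiff A (A.image (· + h))).card := by
    rw [Finset.card_eq_sum_card_fiberwise (f := mk) (t := univ) (fun x _ => mem_univ _),
      Finset.mul_sum]
    have hrhs : (∑ h ∈ HF, (symmDiff A (A.image (· + h))).card)
        = ∑ q ∈ univ, ∑ h ∈ HF,
            ((symmDiff A (A.image (· + h))).filter (fun x => mk x = q)).card := by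
      rw [Finset.sum_comm]
      exact Finset.sum_congr rfl fun h _ =>
        Finset.card_eq_sum_card_fiberwise (f := mk) (t := univ) (fun x _ => mem_univ _)
    rw [hrhs]
    refine Finset.sum_le_sum fun q _ => ?_
    rw [hfibAT q, hfibsum q]
    have ha := hμle q
    by_cases hlt : m < 2 * μ q
    · rw [if_pos hlt]
      nlinarith [Nat.sub_add_cancel ha]
    · rw [if_neg hlt]
      push_neg at hlt
      nlinarith [Nat.sub_add_cancel ha]
  -- put it together over ℝ
  refine ⟨T, ?_⟩
  rw [hYT]
  have hm : 0 < m := Finset.card_pos.2 ⟨0, by simp [HF, H.zero_mem]⟩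
  have hsum_le : ((∑ h ∈ HF, (symmDiff A (A.image (· + h))).card : ℕ) : ℝ)
      ≤ (m : ℝ) * (ε * Fintype.card G) := by
    push_cast
    calc (∑ h ∈ HF, ((symmDiff A (A.image (· + h))).card : ℝ))
        ≤ ∑ _h ∈ HF, ε * Fintype.card G :=
          Finset.sum_le_sum fun h hh => hstab h ((hHF h).1 hh)
      _ = (m : ℝ) * (ε * Fintype.card G) := by rw [Finset.sum_const, nsmul_eq_mul]
  have hfinal : (m : ℝ) * (symmDiff A T).card ≤ (m : ℝ) * (ε * Fintype.card G) := by
    calc (m : ℝ) * (symmDiff A T).card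
        = ((m * (symmDiff A T).card : ℕ) : ℝ) := by push_cast; ring
      _ ≤ ((∑ h ∈ HF, (symmDiff A (A.image (· + h))).card : ℕ) : ℝ) := by exact_mod_cast key
      _ ≤ (m : ℝ) * (ε * Fintype.card G) := hsum_le
  exact le_of_mul_le_mul_left hfinal (by exact_mod_cast hm)
end

section
/- Let G be a finite abelian group, H ≤ G, k ≥ 0, and δ ∈ (0,1). Let A ⊆ G have VC-dimension at most k relative to H. Then there exist an integer m ≤ (30/δ)^k and elements h_1,…,h_m ∈ H such that for all x ∈ H there is i ∈ [m] with |(A−x) Δ (A−h_i)| ≤ δ|G|. -/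
open Finset

section HausslerPacking

variable {α : Type*} [DecidableEq α]


/-- inner sum in direction `y` -/
def innerS (y : α) (F : Finset (Finset α)) (w : Finset α → ℕ) : ℕ :=
  ∑ t ∈ F.filter (fun t => y ∉ t ∧ insert y t ∈ F), min (w t) (w (insert y t))

/-- total weighted one-inclusion edge sum -/
def eSum (V : Finset α) (F : Finset (Finset α)) (w : Finset α → ℕ) : ℕ :=
  ∑ y ∈ V, innerS y F w

lemma density (d : ℕ) (V : Finset α) (F : Finset (Finset α))
    (hF : ∀ f ∈ F, f ⊆ V) (hVC : ∀ s, F.Shatters s → s.card ≤ d)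
    (w : Finset α → ℕ) : eSum V F w ≤ d * ∑ f ∈ F, w f := by
  induction V using Finset.induction_on generalizing F d w with
  | empty => simp [eSum, innerS]
  | @insert x V₀ hx ih =>
    classical
    set L : Finset (Finset α) := F.filter (fun t => x ∉ t ∧ insert x t ∈ F) with hLdef
    set F0 : Finset (Finset α) := F.image (Finset.erase · x) with hF0def
    set w0 : Finset α → ℕ := fun t =>
      max (if t ∈ F then w t else 0) (if insert x t ∈ F then w (insert x t) else 0) with hw0def
    set w1 : Finset α → ℕ := fun t => min (w t) (w (insert x t)) with hw1def
    -- basic membership facts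
    have hmemF0 : ∀ t ∈ F0, x ∉ t := by
      intro t ht
      rw [hF0def, mem_image] at ht
      obtain ⟨g, _, rfl⟩ := ht
      exact notMem_erase x g
    have hF0V : ∀ f ∈ F0, f ⊆ V₀ := by
      intro f hf
      rw [hF0def, mem_image] at hf
      obtain ⟨g, hg, rfl⟩ := hf
      intro a ha
      rw [mem_erase] at ha
      rcases mem_insert.1 (hF g hg ha.2) with h | h
      · exact absurd h ha.1
      · exact h
    have hself0 : ∀ f ∈ F, x ∉ f → f ∈ F0 := by
      intro f hf hxf
      rw [hF0def, mem_image]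
      exact ⟨f, hf, erase_eq_of_notMem hxf⟩
    have hLF0 : ∀ f ∈ L, f ∈ F0 := by
      intro f hf
      rw [hLdef, mem_filter] at hf
      exact hself0 f hf.1 hf.2.1
    have hLV : ∀ f ∈ L, f ⊆ V₀ := fun f hf => hF0V f (hLF0 f hf)
    -- VC facts
    have hVC0 : ∀ s, F0.Shatters s → s.card ≤ d := by
      intro s hs
      have hxs : x ∉ s := by
        obtain ⟨u, hu, hsu⟩ := hs.exists_superset
        exact fun h => hmemF0 u hu (hsu h)
      refine hVC s ?_
      intro t ht
      obtain ⟨u, hu, hsu⟩ := hs ht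
      rw [hF0def, mem_image] at hu
      obtain ⟨g, hg, rfl⟩ := hu
      refine ⟨g, hg, ?_⟩
      rw [← hsu, inter_erase]
      exact (erase_eq_of_notMem fun hxm => hxs (mem_inter.1 hxm).1).symm
    have hVCL : ∀ s, L.Shatters s → s.card + 1 ≤ d := by
      intro s hs
      have hxs : x ∉ s := by
        obtain ⟨u, hu, hsu⟩ := hs.exists_superset
        rw [hLdef, mem_filter] at hu
        exact fun h => hu.2.1 (hsu h)
      have : F.Shatters (insert x s) := by
        intro t ht
        by_cases hxt : x ∈ t
        · obtain ⟨u, hu, hsu⟩ := hs (t := t.erase x) (fun a ha => by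
            rcases mem_insert.1 (ht (mem_of_mem_erase ha)) with h | h
            · exact absurd h (ne_of_mem_erase ha)
            · exact h)
          rw [hLdef, mem_filter] at hu
          refine ⟨insert x u, hu.2.2, ?_⟩
          rw [insert_inter_of_mem (mem_insert_self x u), inter_insert_of_notMem hxs,
            hsu, insert_erase hxt]
        · obtain ⟨u, hu, hsu⟩ := hs (t := t) (fun a ha => by
            rcases mem_insert.1 (ht ha) with h | h
            · exact absurd h (fun he => hxt (he ▸ ha))
            · exact h)
          rw [hLdef, mem_filter] at hu
          refine ⟨u, hu.1, ?_⟩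
          rw [insert_inter_of_notMem hu.2.1, hsu]
      have := hVC _ this
      rwa [card_insert_of_notMem hxs] at this
    -- weight sum
    have hsum : ∑ t ∈ F0, w0 t + ∑ t ∈ L, w1 t = ∑ f ∈ F, w f := by
      have e1 : ∑ t ∈ F0, (if t ∈ F then w t else 0) = ∑ f ∈ F.filter (fun f => x ∉ f), w f := by
        rw [← sum_filter]
        apply sum_congr
        · ext t
          simp only [mem_filter]
          constructor
          · rintro ⟨h0, hf⟩
            exact ⟨hf, hmemF0 t h0⟩
          · rintro ⟨hf, hxf⟩
            exact ⟨hself0 t hf hxf, hf⟩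
        · intros; rfl
      have e2 : ∑ t ∈ F0, (if insert x t ∈ F then w (insert x t) else 0)
          = ∑ f ∈ F.filter (fun f => x ∈ f), w f := by
        rw [← sum_filter]
        refine sum_bij' (fun t _ => insert x t) (fun f _ => f.erase x) ?_ ?_ ?_ ?_ ?_
        · intro t ht
          rw [mem_filter] at ht ⊢
          exact ⟨ht.2, mem_insert_self x t⟩
        · intro f hf
          rw [mem_filter] at hf ⊢
          constructor
          · rw [hF0def, mem_image]; exact ⟨f, hf.1, rfl⟩
          · rw [insert_erase hf.2]; exact hf.1
        · intro t ht
          rw [mem_filter] at ht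
          exact erase_insert (hmemF0 t ht.1)
        · intro f hf
          rw [mem_filter] at hf
          exact insert_erase hf.2
        · intros; rfl
      have e3 : ∑ t ∈ F0, min (if t ∈ F then w t else 0)
          (if insert x t ∈ F then w (insert x t) else 0) = ∑ t ∈ L, w1 t := by
        have hpt : ∀ t ∈ F0, min (if t ∈ F then w t else 0)
            (if insert x t ∈ F then w (insert x t) else 0)
            = if (t ∈ F ∧ insert x t ∈ F) then w1 t else 0 := by
          intro t _
          by_cases h1 : t ∈ F <;> by_cases h2 : insert x t ∈ F <;>
            simp [hw1def, h1, h2]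
        rw [sum_congr rfl hpt, ← sum_filter]
        apply sum_congr _ (fun _ _ => rfl)
        ext t
        simp only [mem_filter, hLdef]
        constructor
        · rintro ⟨h0, hf, hins⟩
          exact ⟨hf, hmemF0 t h0, hins⟩
        · rintro ⟨hf, hxf, hins⟩
          exact ⟨hself0 t hf hxf, hf, hins⟩
      have key : ∀ t ∈ F0, w0 t + min (if t ∈ F then w t else 0)
          (if insert x t ∈ F then w (insert x t) else 0)
          = (if t ∈ F then w t else 0) + (if insert x t ∈ F then w (insert x t) else 0) :=
        fun t _ => max_add_min _ _
      have := sum_congr (rfl : F0 = F0) key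
      rw [sum_add_distrib, sum_add_distrib, e1, e2, e3] at this
      have hsplitF : F.filter (fun f => x ∈ f) = F.filter (fun f => ¬ x ∉ f) := by
        apply filter_congr; intro t _; simp [not_not]
      rw [this, hsplitF, sum_filter_add_sum_filter_not]
    -- the per-direction inequality
    have hy : ∀ y ∈ V₀, innerS y F w ≤ innerS y F0 w0 + innerS y L w1 := by
      intro y hyV
      have hxy : x ≠ y := fun h => hx (h ▸ hyV)
      set lkF := F.filter (fun t => y ∉ t ∧ insert y t ∈ F) with hlkF
      set lk0 := F0.filter (fun t => y ∉ t ∧ insert y t ∈ F0) with hlk0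
      set lkL := L.filter (fun t => y ∉ t ∧ insert y t ∈ L) with hlkL
      set g : Finset α → ℕ := fun t => min (w t) (w (insert y t)) with hg
      set B0 := lkF.filter (fun t => x ∉ t) with hB0def
      set B1 := (lkF.filter (fun t => x ∈ t)).image (Finset.erase · x) with hB1def
      have hB1mem : ∀ t, t ∈ B1 → x ∉ t ∧ insert x t ∈ lkF := by
        intro t ht
        rw [hB1def, mem_image] at ht
        obtain ⟨u, hu, rfl⟩ := ht
        rw [mem_filter] at hu
        refine ⟨notMem_erase _ _, ?_⟩
        rw [insert_erase hu.2]
        exact hu.1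
      have hsplit : innerS y F w = ∑ t ∈ B0, g t + ∑ t ∈ B1, g (insert x t) := by
        have h1 : innerS y F w
            = ∑ t ∈ B0, g t + ∑ t ∈ lkF.filter (fun t => ¬ x ∉ t), g t := by
          rw [innerS, ← hlkF]
          exact (sum_filter_add_sum_filter_not lkF (fun t => x ∉ t) g).symm
        have h2 : lkF.filter (fun t => ¬ x ∉ t) = lkF.filter (fun t => x ∈ t) := by
          apply filter_congr; intro t _; simp [not_not]
        have h3 : ∑ t ∈ B1, g (insert x t)
            = ∑ t ∈ lkF.filter (fun t => x ∈ t), g t := by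
          rw [hB1def, sum_image ?_]
          · apply sum_congr rfl
            intro t ht
            rw [mem_filter] at ht
            rw [insert_erase ht.2]
          · intro a ha b hb hab
            rw [mem_coe, mem_filter] at ha hb
            rw [← insert_erase ha.2, (show a.erase x = b.erase x from hab), insert_erase hb.2]
        rw [h1, h2, h3]
      have hmemlkF : ∀ t ∈ lkF, t ∈ F ∧ y ∉ t ∧ insert y t ∈ F := fun t ht => mem_filter.1 ht
      have hB0lk0 : B0 ⊆ lk0 := by
        intro t ht
        rw [hB0def, mem_filter] at ht
        have hxt := ht.2
        obtain ⟨htF, hyt, hins⟩ := mem_filter.1 ht.1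
        rw [hlk0, mem_filter]
        refine ⟨hself0 t htF hxt, hyt, hself0 _ hins ?_⟩
        rw [mem_insert]
        rintro (h | h)
        · exact hxy h
        · exact hxt h
      have hB1lk0 : B1 ⊆ lk0 := by
        intro t ht
        obtain ⟨hxt, hins⟩ := hB1mem t ht
        obtain ⟨hF1, hy1, hF2⟩ := hmemlkF _ hins
        rw [hlk0, mem_filter]
        have hyt : y ∉ t := fun h => hy1 (mem_insert_of_mem h)
        refine ⟨?_, hyt, ?_⟩
        · rw [hF0def, mem_image]
          exact ⟨insert x t, hF1, erase_insert hxt⟩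
        · rw [hF0def, mem_image]
          refine ⟨insert y (insert x t), hF2, ?_⟩
          show (insert y (insert x t)).erase x = insert y t
          rw [Finset.insert_comm, erase_insert (by
            rw [mem_insert]
            rintro (h | h)
            · exact hxy h
            · exact hxt h)]
      -- φ and the pointwise bound
      set φ : Finset α → ℕ := fun t =>
        (if t ∈ B0 then g t else 0) + (if t ∈ B1 then g (insert x t) else 0) with hφdef
      have k0 : ∑ t ∈ B0, g t = ∑ t ∈ lk0, (if t ∈ B0 then g t else 0) := by
        rw [← sum_subset hB0lk0 (fun t _ ht => if_neg ht)]
        exact sum_congr rfl (fun t ht => (if_pos ht).symm)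
      have k1 : ∑ t ∈ B1, g (insert x t)
          = ∑ t ∈ lk0, (if t ∈ B1 then g (insert x t) else 0) := by
        rw [← sum_subset hB1lk0 (fun t _ ht => if_neg ht)]
        exact sum_congr rfl (fun t ht => (if_pos ht).symm)
      have hφ : ∑ t ∈ B0, g t + ∑ t ∈ B1, g (insert x t) = ∑ t ∈ lk0, φ t := by
        rw [k0, k1, ← sum_add_distrib]
      have hpoint : ∀ t ∈ lk0, φ t ≤ min (w0 t) (w0 (insert y t))
          + (if t ∈ lkL then min (w1 t) (w1 (insert y t)) else 0) := by
        intro t htlk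
        rw [hlk0, mem_filter] at htlk
        obtain ⟨htF0, hyt, hinsF0⟩ := htlk
        have hxt : x ∉ t := hmemF0 t htF0
        have hxyt : x ∉ insert y t := by
          rw [mem_insert]
          rintro (h | h)
          · exact hxy h
          · exact hxt h
        by_cases hb0 : t ∈ B0 <;> by_cases hb1 : t ∈ B1
        · -- both directions present
          have hm0 := mem_filter.1 hb0
          obtain ⟨htF, hyt', hbF⟩ := hmemlkF t hm0.1
          obtain ⟨hxt', hinslk⟩ := hB1mem t hb1
          obtain ⟨haF, hya, hcF⟩ := hmemlkF _ hinslk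
          have habF : insert x (insert y t) ∈ F := by
            rw [← Finset.insert_comm]; exact hcF
          have htlkL : t ∈ lkL := by
            rw [hlkL, mem_filter, hLdef, mem_filter, mem_filter]
            exact ⟨⟨htF, hxt, haF⟩, hyt, hbF, hxyt, habF⟩
          have e1 : w0 t = max (w t) (w (insert x t)) := by
            simp only [hw0def, if_pos htF, if_pos haF]
          have e2 : w0 (insert y t) = max (w (insert y t)) (w (insert x (insert y t))) := by
            simp only [hw0def, if_pos hbF, if_pos habF]
          have e3 : w1 t = min (w t) (w (insert x t)) := rfl
          have e4 : w1 (insert y t) = min (w (insert y t)) (w (insert x (insert y t))) := rfl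
          have e5 : g (insert x t) = min (w (insert x t)) (w (insert x (insert y t))) := by
            simp only [hg, Finset.insert_comm]
          rw [hφdef]
          simp only [if_pos hb0, if_pos hb1, if_pos htlkL, e1, e2, e3, e4, hg]
          rw [Finset.insert_comm y x t]
          omega
        · -- only B0
          have hm0 := mem_filter.1 hb0
          obtain ⟨htF, hyt', hbF⟩ := hmemlkF t hm0.1
          have l1 : w t ≤ w0 t := by
            simp only [hw0def, if_pos htF]
            exact le_max_left _ _
          have l2 : w (insert y t) ≤ w0 (insert y t) := by
            simp only [hw0def, if_pos hbF]
            exact le_max_left _ _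
          rw [hφdef]
          simp only [if_pos hb0, if_neg hb1, add_zero]
          exact le_trans (min_le_min l1 l2) (Nat.le_add_right _ _)
        · -- only B1
          obtain ⟨hxt', hinslk⟩ := hB1mem t hb1
          obtain ⟨haF, hya, hcF⟩ := hmemlkF _ hinslk
          have habF : insert x (insert y t) ∈ F := by
            rw [← Finset.insert_comm]; exact hcF
          have l1 : w (insert x t) ≤ w0 t := by
            simp only [hw0def, if_pos haF]
            exact le_max_right _ _
          have l2 : w (insert x (insert y t)) ≤ w0 (insert y t) := by
            simp only [hw0def, if_pos habF]
            exact le_max_right _ _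
          have e5 : g (insert x t) = min (w (insert x t)) (w (insert x (insert y t))) := by
            simp only [hg, Finset.insert_comm]
          rw [hφdef]
          simp only [if_pos hb1, if_neg hb0, zero_add, hg]
          rw [Finset.insert_comm y x t]
          exact le_trans (min_le_min l1 l2) (Nat.le_add_right _ _)
        · rw [hφdef]
          simp only [if_neg hb0, if_neg hb1, add_zero]
          exact Nat.zero_le _
      have hlkLsub : lkL ⊆ lk0 := by
        intro t ht
        rw [hlkL, mem_filter] at ht
        obtain ⟨htL, hyt, hins⟩ := ht
        rw [hlk0, mem_filter]
        exact ⟨hLF0 t htL, hyt, hLF0 _ hins⟩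
      have hfin : ∑ t ∈ lk0, (if t ∈ lkL then min (w1 t) (w1 (insert y t)) else 0)
          = innerS y L w1 := by
        rw [← sum_subset hlkLsub (fun t _ ht => if_neg ht)]
        exact sum_congr rfl fun t ht => if_pos ht
      have hlast : innerS y F0 w0 = ∑ t ∈ lk0, min (w0 t) (w0 (insert y t)) := rfl
      calc innerS y F w = ∑ t ∈ B0, g t + ∑ t ∈ B1, g (insert x t) := hsplit
        _ = ∑ t ∈ lk0, φ t := hφ
        _ ≤ ∑ t ∈ lk0, (min (w0 t) (w0 (insert y t))
            + (if t ∈ lkL then min (w1 t) (w1 (insert y t)) else 0)) := sum_le_sum hpoint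
        _ = innerS y F0 w0 + innerS y L w1 := by rw [sum_add_distrib, hfin, hlast]
    -- final assembly
    have h2 : ∑ y ∈ V₀, innerS y F w ≤ eSum V₀ F0 w0 + eSum V₀ L w1 := by
      calc ∑ y ∈ V₀, innerS y F w ≤ ∑ y ∈ V₀, (innerS y F0 w0 + innerS y L w1) := sum_le_sum hy
        _ = _ := by rw [sum_add_distrib]; rfl
    have h3 : eSum V₀ F0 w0 ≤ d * ∑ t ∈ F0, w0 t := ih d F0 hF0V hVC0 w0
    have h4 : eSum V₀ L w1 ≤ (d - 1) * ∑ t ∈ L, w1 t :=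
      ih (d - 1) L hLV (fun s hs => by have := hVCL s hs; omega) w1
    have hxterm : innerS x F w = ∑ t ∈ L, w1 t := rfl
    have key : ∑ t ∈ L, w1 t + (d - 1) * ∑ t ∈ L, w1 t ≤ d * ∑ t ∈ L, w1 t := by
      rcases eq_or_ne L ∅ with hL | hL
      · simp [hL]
      · have hd : 1 ≤ d := by
          have := hVCL ∅ (shatters_empty.2 (nonempty_iff_ne_empty.2 hL))
          omega
        obtain ⟨d', rfl⟩ : ∃ d', d = d' + 1 := ⟨d - 1, by omega⟩
        have hdd : d' + 1 - 1 = d' := rfl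
        rw [hdd]
        calc ∑ t ∈ L, w1 t + d' * ∑ t ∈ L, w1 t = (d' + 1) * ∑ t ∈ L, w1 t := by ring
          _ ≤ _ := le_refl _
    rw [eSum, sum_insert hx, hxterm, ← hsum]
    calc ∑ t ∈ L, w1 t + ∑ y ∈ V₀, innerS y F w
        ≤ ∑ t ∈ L, w1 t + (d * ∑ t ∈ F0, w0 t + (d - 1) * ∑ t ∈ L, w1 t) :=
          add_le_add le_rfl (h2.trans (add_le_add h3 h4))
      _ = d * ∑ t ∈ F0, w0 t + (∑ t ∈ L, w1 t + (d - 1) * ∑ t ∈ L, w1 t) := by ring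
      _ ≤ d * ∑ t ∈ F0, w0 t + d * ∑ t ∈ L, w1 t := add_le_add le_rfl key
      _ = d * (∑ t ∈ F0, w0 t + ∑ t ∈ L, w1 t) := by ring



lemma sauer_count (Q : Finset (Finset α)) (S : Finset α) (k : ℕ)
    (hQ : ∀ f ∈ Q, f ⊆ S) (hVC : ∀ u, Q.Shatters u → u.card ≤ k) :
    Q.card ≤ ∑ i ∈ Finset.range (k+1), S.card.choose i := by
  classical
  refine (Finset.card_le_card_shatterer Q).trans ?_
  have hsub : Q.shatterer ⊆ (Finset.range (k+1)).biUnion (fun i => S.powersetCard i) := by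
    intro u hu
    rw [mem_shatterer] at hu
    obtain ⟨f, hf, hufsub⟩ := hu.exists_superset
    rw [mem_biUnion]
    exact ⟨u.card, mem_range.2 (Nat.lt_succ_of_le (hVC u hu)),
      mem_powersetCard.2 ⟨hufsub.trans (hQ f hf), rfl⟩⟩
  refine (card_le_card hsub).trans (card_biUnion_le.trans ?_)
  exact le_of_eq (sum_congr rfl fun i _ => card_powersetCard i S)

variable {G : Type*} [Fintype G] [DecidableEq G]

/-- number of split classes (with min-multiplicity) of `P` on `S` in direction `y` -/
def bfun (P : Finset (Finset G)) (S : Finset G) (y : G) : ℕ :=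
  ∑ t ∈ P.image (· ∩ S), min ((P.filter (fun f => f ∩ S = t ∧ y ∉ f)).card)
    ((P.filter (fun f => f ∩ S = t ∧ y ∈ f)).card)

lemma lowerB (P : Finset (Finset G)) (δ : ℝ)
    (hsep : ∀ f ∈ P, ∀ g ∈ P, f ≠ g → δ * (Fintype.card G) < ((symmDiff f g).card : ℝ))
    (S : Finset G) :
    δ * (Fintype.card G) / 2 * ((P.card : ℝ) - ((P.image (· ∩ S)).card : ℝ))
      ≤ ∑ y ∈ Sᶜ, (bfun P S y : ℝ) := by
  classical
  have hclass : ∀ t ∈ P.image (· ∩ S),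
      δ * (Fintype.card G) / 2 * (((P.filter (fun f => f ∩ S = t)).card : ℝ) - 1)
      ≤ ∑ y ∈ Sᶜ, (min (((P.filter (fun f => f ∩ S = t)).filter (fun f => y ∉ f)).card)
          (((P.filter (fun f => f ∩ S = t)).filter (fun f => y ∈ f)).card) : ℝ) := by
    intro t htT
    set C := P.filter (fun f => f ∩ S = t) with hC
    have hCsub : ∀ f ∈ C, f ∈ P := fun f hf => (mem_filter.1 hf).1
    have hCt : ∀ f ∈ C, f ∩ S = t := fun f hf => (mem_filter.1 hf).2
    have hcc : ∀ y : G, (C.filter (fun f => y ∉ f)).card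
        + (C.filter (fun f => y ∈ f)).card = C.card := by
      intro y
      have h := card_filter_add_card_filter_not (s := C) (p := fun f => y ∉ f)
      have h2 : C.filter (fun a => ¬ (fun f => y ∉ f) a) = C.filter (fun f => y ∈ f) := by
        apply filter_congr; intro f _; simp [not_not]
      rwa [h2] at h
    have hc1' : 1 ≤ C.card := by
      rw [mem_image] at htT
      obtain ⟨f, hf, hft⟩ := htT
      exact card_pos.2 ⟨f, by rw [hC, mem_filter]; exact ⟨hf, hft⟩⟩
    -- counting identity
    have hA : ∀ y, 2 * (C.filter (fun f => y ∉ f)).card * (C.filter (fun f => y ∈ f)).card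
        = ∑ f ∈ C, ∑ g ∈ C, (if y ∈ symmDiff f g then 1 else 0) := by
      intro y
      have hinner : ∀ f ∈ C, (∑ g ∈ C, (if y ∈ symmDiff f g then 1 else 0))
          = if y ∈ f then (C.filter (fun f => y ∉ f)).card
            else (C.filter (fun f => y ∈ f)).card := by
        intro f _
        by_cases hyf : y ∈ f
        · rw [if_pos hyf, card_filter]
          exact sum_congr rfl fun g _ => by
            congr 1
            simp [Finset.mem_symmDiff, hyf]
        · rw [if_neg hyf, card_filter]
          exact sum_congr rfl fun g _ => by
            congr 1
            simp [Finset.mem_symmDiff, hyf]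
      rw [sum_congr rfl hinner, sum_ite, sum_const, sum_const, smul_eq_mul, smul_eq_mul]
      have h2 : C.filter (fun f => ¬ y ∈ f) = C.filter (fun f => y ∉ f) := rfl
      rw [h2]
      ring
    -- symmdiff sums over y
    have hB : ∀ f ∈ C, ∀ g ∈ C, (∑ y ∈ Sᶜ, (if y ∈ symmDiff f g then 1 else 0))
        = (symmDiff f g).card := by
      intro f hf g hg
      rw [← card_filter]
      congr 1
      ext z
      simp only [mem_filter, mem_compl]
      constructor
      · exact fun h => h.2
      · intro hz
        refine ⟨fun hzS => ?_, hz⟩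
        rcases Finset.mem_symmDiff.1 hz with ⟨h1, h2⟩ | ⟨h1, h2⟩
        · refine h2 ?_
          have hmem : z ∈ g ∩ S := by
            rw [hCt g hg, ← hCt f hf]
            exact mem_inter.2 ⟨h1, hzS⟩
          exact (mem_inter.1 hmem).1
        · refine h2 ?_
          have hmem : z ∈ f ∩ S := by
            rw [hCt f hf, ← hCt g hg]
            exact mem_inter.2 ⟨h1, hzS⟩
          exact (mem_inter.1 hmem).1
    -- lower bound on double sum of symmdiffs
    have hCC : (δ * (Fintype.card G)) * (C.card : ℝ) * ((C.card : ℝ) - 1)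
        ≤ ∑ f ∈ C, ∑ g ∈ C, ((symmDiff f g).card : ℝ) := by
      have hfterm : ∀ f ∈ C, (δ * (Fintype.card G)) * ((C.card : ℝ) - 1)
          ≤ ∑ g ∈ C, ((symmDiff f g).card : ℝ) := by
        intro f hf
        have hdrop : ∑ g ∈ C.erase f, ((symmDiff f g).card : ℝ)
            ≤ ∑ g ∈ C, ((symmDiff f g).card : ℝ) :=
          sum_le_sum_of_subset_of_nonneg (erase_subset f C) (fun _ _ _ => by positivity)
        refine le_trans ?_ hdrop
        have h1 : ∑ g ∈ C.erase f, (δ * (Fintype.card G))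
            ≤ ∑ g ∈ C.erase f, ((symmDiff f g).card : ℝ) :=
          sum_le_sum fun g hg => le_of_lt (hsep f (hCsub f hf) g
            (hCsub g (mem_of_mem_erase hg)) (Ne.symm (ne_of_mem_erase hg)))
        refine le_trans (le_of_eq ?_) h1
        rw [sum_const, card_erase_of_mem hf, nsmul_eq_mul, Nat.cast_sub hc1', Nat.cast_one]
        ring
      have h := sum_le_sum hfterm
      rw [sum_const, nsmul_eq_mul] at h
      calc (δ * (Fintype.card G)) * (C.card : ℝ) * ((C.card : ℝ) - 1)
          = (C.card : ℝ) * ((δ * (Fintype.card G)) * ((C.card : ℝ) - 1)) := by ring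
        _ ≤ _ := h
    -- upper bound: 2*c0*c1 <= 2*min*c
    have hD : ∀ y : G, (2 * (C.filter (fun f => y ∉ f)).card * (C.filter (fun f => y ∈ f)).card : ℕ)
        ≤ 2 * (min ((C.filter (fun f => y ∉ f)).card) ((C.filter (fun f => y ∈ f)).card)) * C.card := by
      intro y
      have hmm := min_mul_max ((C.filter (fun f => y ∉ f)).card) ((C.filter (fun f => y ∈ f)).card)
      have hle : max ((C.filter (fun f => y ∉ f)).card) ((C.filter (fun f => y ∈ f)).card) ≤ C.card := by
        have := hcc y
        omega
      calc 2 * (C.filter (fun f => y ∉ f)).card * (C.filter (fun f => y ∈ f)).card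
          = 2 * ((min ((C.filter (fun f => y ∉ f)).card) ((C.filter (fun f => y ∈ f)).card))
            * (max ((C.filter (fun f => y ∉ f)).card) ((C.filter (fun f => y ∈ f)).card))) := by
            rw [hmm]; ring
        _ ≤ 2 * ((min ((C.filter (fun f => y ∉ f)).card) ((C.filter (fun f => y ∈ f)).card)) * C.card) :=
            Nat.mul_le_mul_left 2 (Nat.mul_le_mul_left _ hle)
        _ = _ := by ring
    -- combine
    have hkey : (δ * (Fintype.card G)) * (C.card : ℝ) * ((C.card : ℝ) - 1)
        ≤ 2 * (C.card : ℝ) * ∑ y ∈ Sᶜ, (min ((C.filter (fun f => y ∉ f)).card)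
            ((C.filter (fun f => y ∈ f)).card) : ℝ) := by
      have e1 : ∑ y ∈ Sᶜ, (2 * (C.filter (fun f => y ∉ f)).card
            * (C.filter (fun f => y ∈ f)).card : ℝ)
          = ∑ f ∈ C, ∑ g ∈ C, ((symmDiff f g).card : ℝ) := by
        have : ∀ y ∈ Sᶜ, (2 * (C.filter (fun f => y ∉ f)).card
            * (C.filter (fun f => y ∈ f)).card : ℝ)
            = ∑ f ∈ C, ∑ g ∈ C, ((if y ∈ symmDiff f g then 1 else 0 : ℕ) : ℝ) := by
          intro y _
          calc (2 * ((C.filter (fun f => y ∉ f)).card : ℝ)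
              * ((C.filter (fun f => y ∈ f)).card : ℝ) : ℝ)
              = ((2 * (C.filter (fun f => y ∉ f)).card
                * (C.filter (fun f => y ∈ f)).card : ℕ) : ℝ) := by push_cast; ring
            _ = ((∑ f ∈ C, ∑ g ∈ C, (if y ∈ symmDiff f g then 1 else 0) : ℕ) : ℝ) := by
                rw [hA y]
            _ = ∑ f ∈ C, ∑ g ∈ C, ((if y ∈ symmDiff f g then 1 else 0 : ℕ) : ℝ) := by
                push_cast
                rfl
        rw [sum_congr rfl this, sum_comm]
        apply sum_congr rfl
        intro f hf
        rw [sum_comm]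
        apply sum_congr rfl
        intro g hg
        rw [← Nat.cast_sum, hB f hf g hg]
      calc (δ * (Fintype.card G)) * (C.card : ℝ) * ((C.card : ℝ) - 1)
          ≤ ∑ f ∈ C, ∑ g ∈ C, ((symmDiff f g).card : ℝ) := hCC
        _ = ∑ y ∈ Sᶜ, (2 * (C.filter (fun f => y ∉ f)).card
            * (C.filter (fun f => y ∈ f)).card : ℝ) := e1.symm
        _ ≤ ∑ y ∈ Sᶜ, (2 * (min ((C.filter (fun f => y ∉ f)).card)
            ((C.filter (fun f => y ∈ f)).card) : ℝ) * (C.card : ℝ)) := by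
            apply sum_le_sum
            intro y _
            have := hD y
            have hcast : ((2 * (C.filter (fun f => y ∉ f)).card * (C.filter (fun f => y ∈ f)).card : ℕ) : ℝ)
                ≤ ((2 * (min ((C.filter (fun f => y ∉ f)).card) ((C.filter (fun f => y ∈ f)).card)) * C.card : ℕ) : ℝ) :=
              Nat.cast_le.2 this
            push_cast at hcast
            convert hcast using 2 <;> push_cast <;> ring
        _ = 2 * (C.card : ℝ) * ∑ y ∈ Sᶜ, (min ((C.filter (fun f => y ∉ f)).card)
            ((C.filter (fun f => y ∈ f)).card) : ℝ) := by
            rw [mul_sum]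
            apply sum_congr rfl
            intro y _
            push_cast
            ring
    have hcpos : (0 : ℝ) < (C.card : ℝ) := by
      exact_mod_cast hc1'
    nlinarith [hkey, hcpos]
  -- now sum over classes
  have hstep : ∑ t ∈ P.image (· ∩ S),
      (δ * (Fintype.card G) / 2 * (((P.filter (fun f => f ∩ S = t)).card : ℝ) - 1))
      ≤ ∑ y ∈ Sᶜ, (bfun P S y : ℝ) := by
    refine le_trans (sum_le_sum hclass) ?_
    rw [sum_comm]
    apply le_of_eq
    apply sum_congr rfl
    intro y _
    rw [bfun, Nat.cast_sum]
    apply sum_congr rfl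
    intro t _
    rw [filter_filter, filter_filter, Nat.cast_min]
  refine le_trans (le_of_eq ?_) hstep
  have hτ : ∑ t ∈ P.image (· ∩ S), ((P.filter (fun f => f ∩ S = t)).card : ℝ)
      = (P.card : ℝ) := by
    rw [← Nat.cast_sum]
    norm_cast
    exact (card_eq_sum_card_image (· ∩ S) P).symm
  rw [← mul_sum, sum_sub_distrib, hτ, sum_const, nsmul_eq_mul, mul_one]

lemma upperB (P : Finset (Finset G)) (k : ℕ)
    (hVC : ∀ s, P.Shatters s → s.card ≤ k) (A : Finset G) :
    ∑ y ∈ A, bfun P (A.erase y) y ≤ k * P.card := by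
  classical
  set F := P.image (· ∩ A) with hF
  set w : Finset G → ℕ := fun u => (P.filter (fun f => f ∩ A = u)).card with hw
  have hFA : ∀ f ∈ F, f ⊆ A := by
    intro f hf
    rw [hF, mem_image] at hf
    obtain ⟨g, _, rfl⟩ := hf
    exact inter_subset_right
  have hVCA : ∀ u, F.Shatters u → u.card ≤ k := by
    intro u hu
    have huA : u ⊆ A := by
      obtain ⟨v, hv, huv⟩ := hu.exists_superset
      exact huv.trans (hFA v hv)
    refine hVC u ?_
    intro t ht
    obtain ⟨v, hv, hvt⟩ := hu ht
    rw [hF, mem_image] at hv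
    obtain ⟨g, hg, rfl⟩ := hv
    refine ⟨g, hg, ?_⟩
    rw [← hvt, inter_comm g A, ← inter_assoc, inter_eq_left.2 huA]
  have hwsum : ∑ u ∈ F, w u = P.card := by
    rw [hF]
    exact (card_eq_sum_card_image (· ∩ A) P).symm
  have hbound : ∀ y ∈ A, bfun P (A.erase y) y ≤ innerS y F w := by
    intro y hyA
    have hAeq : insert y (A.erase y) = A := insert_erase hyA
    have hterm : ∀ t ∈ P.image (· ∩ (A.erase y)),
        min ((P.filter (fun f => f ∩ (A.erase y) = t ∧ y ∉ f)).card)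
          ((P.filter (fun f => f ∩ (A.erase y) = t ∧ y ∈ f)).card)
        = min (w t) (w (insert y t)) := by
      intro t htT
      have hyt : y ∉ t := by
        rw [mem_image] at htT
        obtain ⟨g, _, rfl⟩ := htT
        exact fun h => notMem_erase y A (mem_inter.1 h).2
      have q0 : P.filter (fun f => f ∩ (A.erase y) = t ∧ y ∉ f)
          = P.filter (fun f => f ∩ A = t) := by
        apply filter_congr
        intro f _
        constructor
        · rintro ⟨h1, h2⟩
          rw [← hAeq, inter_insert_of_notMem h2, h1]
        · intro h1
          have hyf : y ∉ f := by
            intro hyf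
            exact hyt (h1 ▸ mem_inter.2 ⟨hyf, hyA⟩)
          refine ⟨?_, hyf⟩
          rw [inter_erase, h1, erase_eq_of_notMem hyt]
      have q1 : P.filter (fun f => f ∩ (A.erase y) = t ∧ y ∈ f)
          = P.filter (fun f => f ∩ A = insert y t) := by
        apply filter_congr
        intro f _
        constructor
        · rintro ⟨h1, h2⟩
          rw [← hAeq, inter_insert_of_mem h2, h1]
        · intro h1
          have hyf : y ∈ f := by
            have : y ∈ f ∩ A := h1 ▸ mem_insert_self y t
            exact (mem_inter.1 this).1
          refine ⟨?_, hyf⟩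
          rw [inter_erase, h1, erase_insert hyt]
      rw [q0, q1]
    rw [bfun, sum_congr rfl hterm]
    have hzero := Finset.sum_filter_ne_zero (s := P.image (· ∩ (A.erase y)))
      (f := fun t => min (w t) (w (insert y t)))
    rw [← hzero]
    apply sum_le_sum_of_subset
    intro t ht
    rw [mem_filter] at ht
    obtain ⟨htT, hne⟩ := ht
    have hyt : y ∉ t := by
      rw [mem_image] at htT
      obtain ⟨g, _, rfl⟩ := htT
      exact fun h => notMem_erase y A (mem_inter.1 h).2
    have h0 : w t ≠ 0 := fun h => hne (by rw [h]; simp)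
    have h1 : w (insert y t) ≠ 0 := fun h => hne (by rw [h]; simp)
    have m0 : t ∈ F := by
      rw [hw] at h0
      obtain ⟨f, hf⟩ := card_pos.1 (Nat.pos_of_ne_zero h0)
      rw [mem_filter] at hf
      rw [hF, mem_image]
      exact ⟨f, hf.1, hf.2⟩
    have m1 : insert y t ∈ F := by
      rw [hw] at h1
      obtain ⟨f, hf⟩ := card_pos.1 (Nat.pos_of_ne_zero h1)
      rw [mem_filter] at hf
      rw [hF, mem_image]
      exact ⟨f, hf.1, hf.2⟩
    rw [mem_filter]
    exact ⟨m0, hyt, m1⟩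
  calc ∑ y ∈ A, bfun P (A.erase y) y ≤ ∑ y ∈ A, innerS y F w := sum_le_sum hbound
    _ = eSum A F w := rfl
    _ ≤ k * ∑ u ∈ F, w u := density k A F hFA hVCA w
    _ = k * P.card := by rw [hwsum]

lemma exchange (P : Finset (Finset G)) (s : ℕ) :
    ∑ S ∈ powersetCard s (univ : Finset G), ∑ y ∈ Sᶜ, (bfun P S y : ℝ)
      = ∑ A ∈ powersetCard (s+1) (univ : Finset G), ∑ y ∈ A, (bfun P (A.erase y) y : ℝ) := by
  classical
  rw [Finset.sum_sigma' (powersetCard s (univ : Finset G)) (fun S => Sᶜ)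
    (fun S y => (bfun P S y : ℝ))]
  rw [Finset.sum_sigma' (powersetCard (s+1) (univ : Finset G)) (fun A => A)
    (fun A y => (bfun P (A.erase y) y : ℝ))]
  refine Finset.sum_bij' (fun p _ => (⟨insert p.2 p.1, p.2⟩ : Σ _ : Finset G, G))
    (fun q _ => (⟨q.1.erase q.2, q.2⟩ : Σ _ : Finset G, G)) ?_ ?_ ?_ ?_ ?_
  · rintro ⟨S, y⟩ hp
    rw [mem_sigma, mem_powersetCard_univ] at hp ⊢
    obtain ⟨hS, hy⟩ := hp
    rw [mem_compl] at hy
    constructor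
    · rw [card_insert_of_notMem hy, hS]
    · exact mem_insert_self _ _
  · rintro ⟨A, y⟩ hq
    rw [mem_sigma, mem_powersetCard_univ] at hq ⊢
    obtain ⟨hA, hy⟩ := hq
    constructor
    · rw [card_erase_of_mem hy, hA]
      omega
    · rw [mem_compl]
      exact notMem_erase y A
  · rintro ⟨S, y⟩ hp
    rw [mem_sigma, mem_powersetCard_univ] at hp
    have : (insert y S).erase y = S := by
      rw [erase_insert]
      rw [mem_compl] at hp
      exact hp.2
    simp only [this]
  · rintro ⟨A, y⟩ hq
    rw [mem_sigma, mem_powersetCard_univ] at hq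
    have : insert y (A.erase y) = A := insert_erase hq.2
    simp only [this]
  · rintro ⟨S, y⟩ hp
    rw [mem_sigma, mem_powersetCard_univ] at hp
    have : (insert y S).erase y = S := by
      rw [erase_insert]
      rw [mem_compl] at hp
      exact hp.2
    simp only [this]

lemma numeric (k s : ℕ) (δ : ℝ) (hδ0 : 0 < δ) (hk : 1 ≤ k)
    (hks : k ≤ s) (hs5 : (s : ℝ) ≤ 5 * k / δ) :
    2 * (∑ i ∈ Finset.range (k+1), (s.choose i : ℝ)) ≤ (30 / δ) ^ k := by
  have hkpos : (0:ℝ) < k := by exact_mod_cast hk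
  have hspos : (0:ℝ) < s := lt_of_lt_of_le hkpos (by exact_mod_cast hks)
  set x : ℝ := (k : ℝ) / s with hx
  have hx0 : 0 < x := div_pos hkpos hspos
  have hx1 : x ≤ 1 := by
    rw [hx, div_le_one hspos]
    exact_mod_cast hks
  set SS : ℝ := ∑ i ∈ Finset.range (k+1), (s.choose i : ℝ) with hSS
  have h1 : SS * x ^ k ≤ (1 + x) ^ s := by
    have step1 : SS * x ^ k = ∑ i ∈ Finset.range (k+1), (s.choose i : ℝ) * x ^ k := by
      rw [hSS, sum_mul]
    have step2 : ∑ i ∈ Finset.range (k+1), (s.choose i : ℝ) * x ^ k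
        ≤ ∑ i ∈ Finset.range (k+1), (s.choose i : ℝ) * x ^ i := by
      apply sum_le_sum
      intro i hi
      have hik : i ≤ k := Nat.lt_succ_iff.1 (mem_range.1 hi)
      exact mul_le_mul_of_nonneg_left (pow_le_pow_of_le_one (le_of_lt hx0) hx1 hik)
        (Nat.cast_nonneg _)
    have step3 : ∑ i ∈ Finset.range (k+1), (s.choose i : ℝ) * x ^ i
        ≤ ∑ i ∈ Finset.range (s+1), (s.choose i : ℝ) * x ^ i := by
      apply sum_le_sum_of_subset_of_nonneg
      · exact Finset.range_subset_range.2 (by omega)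
      · intro i _ _
        positivity
    have step4 : ∑ i ∈ Finset.range (s+1), (s.choose i : ℝ) * x ^ i = (1 + x) ^ s := by
      rw [add_comm (1:ℝ) x, add_pow]
      apply sum_congr rfl
      intro i _
      rw [one_pow]
      ring
    rw [step1, ← step4]
    exact le_trans step2 step3
  have h2 : (1 + x) ^ s ≤ Real.exp 1 ^ k := by
    have e1 : (1 + x) ^ s ≤ Real.exp x ^ s := by
      apply pow_le_pow_left₀ (by positivity)
      rw [add_comm]
      exact Real.add_one_le_exp x
    have e2 : Real.exp x ^ s = Real.exp ((s : ℝ) * x) := (Real.exp_nat_mul x s).symm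
    have e3 : (s : ℝ) * x = (k : ℝ) := by
      rw [hx]
      field_simp
    rw [e2, e3] at e1
    rw [← Real.exp_one_pow] at e1
    exact e1
  have h3 : SS ≤ (Real.exp 1 * s / k) ^ k := by
    have hxk : 0 < x ^ k := pow_pos hx0 k
    have : SS ≤ Real.exp 1 ^ k / x ^ k := by
      rw [le_div_iff₀ hxk]
      exact le_trans h1 h2
    refine le_trans this (le_of_eq ?_)
    rw [← div_pow]
    congr 1
    rw [hx]
    field_simp
  have h4 : (Real.exp 1 * s / k) ≤ 5 * Real.exp 1 / δ := by
    rw [div_le_div_iff₀ hkpos hδ0]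
    have := mul_le_mul_of_nonneg_left hs5 (le_of_lt (Real.exp_pos 1))
    calc Real.exp 1 * s * δ ≤ (Real.exp 1 * (5 * k / δ)) * δ := by nlinarith [Real.exp_pos 1]
      _ = 5 * Real.exp 1 * k := by field_simp
  have hbase : (0:ℝ) ≤ Real.exp 1 * s / k := by positivity
  have h5 : SS ≤ (5 * Real.exp 1 / δ) ^ k := le_trans h3 (pow_le_pow_left₀ hbase h4 k)
  have h6 : (2:ℝ) ≤ (6 / Real.exp 1) ^ k := by
    have he3 : Real.exp 1 ≤ 3 := le_of_lt (lt_trans Real.exp_one_lt_d9 (by norm_num))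
    have h2e : (2:ℝ) ≤ 6 / Real.exp 1 := by
      rw [le_div_iff₀ (Real.exp_pos 1)]
      nlinarith
    calc (2:ℝ) ≤ 6 / Real.exp 1 := h2e
      _ ≤ (6 / Real.exp 1) ^ k := le_self_pow₀ (by nlinarith) (by omega)
  have hsplit : (30 / δ) ^ k = (6 / Real.exp 1) ^ k * (5 * Real.exp 1 / δ) ^ k := by
    rw [← mul_pow]
    congr 1
    field_simp
    ring
  calc 2 * SS ≤ 2 * (5 * Real.exp 1 / δ) ^ k :=
        mul_le_mul_of_nonneg_left h5 (by norm_num)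
    _ ≤ (6 / Real.exp 1) ^ k * (5 * Real.exp 1 / δ) ^ k :=
        mul_le_mul_of_nonneg_right h6 (by positivity)
    _ = (30 / δ) ^ k := hsplit.symm

lemma packing {G : Type*} [Fintype G] [DecidableEq G] (k : ℕ) (δ : ℝ)
    (hδ0 : 0 < δ) (hδ1 : δ < 1) (P : Finset (Finset G))
    (hsep : ∀ f ∈ P, ∀ g ∈ P, f ≠ g → δ * (Fintype.card G) < ((symmDiff f g).card : ℝ))
    (hVC : ∀ s, P.Shatters s → s.card ≤ k) :
    (P.card : ℝ) ≤ (30 / δ) ^ k := by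
  classical
  have h30 : (1:ℝ) ≤ 30 / δ := by
    rw [le_div_iff₀ hδ0]
    linarith
  have hpow1 : (1:ℝ) ≤ (30 / δ) ^ k := one_le_pow₀ h30
  rcases P.eq_empty_or_nonempty with rfl | hPne
  · simp only [card_empty, Nat.cast_zero]
    positivity
  rcases Nat.eq_zero_or_pos k with rfl | hk
  · -- VC dim 0: all sets equal
    have hcard : P.card ≤ 1 := by
      rw [card_le_one]
      intro f hf g hg
      by_contra hne
      have hlt := hsep f hf g hg hne
      have hpos : 0 < (symmDiff f g).card := by
        by_contra h0
        push_neg at h0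
        have : ((symmDiff f g).card : ℝ) ≤ 0 := by exact_mod_cast h0
        have hn0 : (0:ℝ) ≤ (Fintype.card G : ℝ) := Nat.cast_nonneg _
        nlinarith [hn0]
      obtain ⟨z, hz⟩ := card_pos.1 hpos
      have hshat : P.Shatters {z} := by
        intro t ht
        rcases Finset.mem_symmDiff.1 hz with ⟨h1, h2⟩ | ⟨h1, h2⟩
        · rcases Finset.subset_singleton_iff.1 ht with rfl | rfl
          · exact ⟨g, hg, by rw [singleton_inter_of_notMem h2]⟩
          · exact ⟨f, hf, by rw [singleton_inter_of_mem h1]⟩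
        · rcases Finset.subset_singleton_iff.1 ht with rfl | rfl
          · exact ⟨f, hf, by rw [singleton_inter_of_notMem h2]⟩
          · exact ⟨g, hg, by rw [singleton_inter_of_mem h1]⟩
      have := hVC {z} hshat
      simp at this
    calc (P.card : ℝ) ≤ 1 := by exact_mod_cast hcard
      _ ≤ _ := hpow1
  -- k ≥ 1
  rcases Nat.eq_zero_or_pos (Fintype.card G) with hn0 | hn
  · -- empty ground type
    have : P.card ≤ 1 := by
      rw [card_le_one]
      intro f hf g hg
      have hfe : f = ∅ := by
        rw [← Finset.subset_empty]
        intro a _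
        exact absurd (Fintype.card_pos_iff.2 ⟨a⟩) (by omega)
      have hge : g = ∅ := by
        rw [← Finset.subset_empty]
        intro a _
        exact absurd (Fintype.card_pos_iff.2 ⟨a⟩) (by omega)
      rw [hfe, hge]
    calc (P.card : ℝ) ≤ 1 := by exact_mod_cast this
      _ ≤ _ := hpow1
  -- main case
  set n := Fintype.card G with hn'
  set s := ⌈(4 * k : ℝ) / δ⌉₊ with hs
  have hs4 : (4 * k : ℝ) / δ ≤ s := Nat.le_ceil _
  have h4k : (4 * k : ℝ) ≤ (4 * k : ℝ) / δ := by
    rw [le_div_iff₀ hδ0]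
    nlinarith [(by exact_mod_cast hk : (1:ℝ) ≤ k)]
  have hks : k ≤ s := by
    have : (k : ℝ) ≤ s := by
      have h1 : (k:ℝ) ≤ 4 * k := by nlinarith [(by exact_mod_cast hk : (1:ℝ) ≤ k)]
      linarith
    exact_mod_cast this
  have hs5 : (s : ℝ) ≤ 5 * k / δ := by
    have hceil : (s : ℝ) < (4 * k : ℝ) / δ + 1 := Nat.ceil_lt_add_one (by positivity)
    have h1δ : (1:ℝ) ≤ (k : ℝ) / δ := by
      rw [le_div_iff₀ hδ0]
      have : (1:ℝ) ≤ k := by exact_mod_cast hk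
      linarith
    have : (4 * k : ℝ) / δ + 1 ≤ 5 * k / δ := by
      have e : (5 * k : ℝ) / δ = (4 * k : ℝ) / δ + (k:ℝ)/δ := by ring
      rw [e]
      linarith
    linarith
  -- main claim
  have hmain : (P.card : ℝ) ≤ 2 * ∑ i ∈ Finset.range (k+1), (s.choose i : ℝ) := by
    by_cases hsn : s ≤ n
    · -- sampling argument
      have hex : ∃ S ∈ powersetCard s (univ : Finset G),
          (P.card : ℝ) / 2 ≤ ((P.image (· ∩ S)).card : ℝ) := by
        by_contra hno
        push_neg at hno
        have hnonempty : (powersetCard s (univ : Finset G)).Nonempty := by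
          rw [← card_pos, card_powersetCard, card_univ]
          exact Nat.choose_pos hsn
        have hmpos : (0:ℝ) < P.card := by exact_mod_cast card_pos.2 hPne
        have hnpos : (0:ℝ) < n := by exact_mod_cast hn
        -- chain
        have hper : ∀ S ∈ powersetCard s (univ : Finset G),
            δ * n / 2 * ((P.card : ℝ) / 2) ≤ ∑ y ∈ Sᶜ, (bfun P S y : ℝ) := by
          intro S hS
          refine le_trans ?_ (lowerB P δ hsep S)
          apply mul_le_mul_of_nonneg_left _ (by positivity)
          have := le_of_lt (hno S hS)
          linarith
        have hlhs : ((powersetCard s (univ : Finset G)).card : ℝ)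
            * (δ * n / 2 * ((P.card : ℝ) / 2))
            ≤ ∑ S ∈ powersetCard s (univ : Finset G), ∑ y ∈ Sᶜ, (bfun P S y : ℝ) := by
          rw [← nsmul_eq_mul, ← sum_const]
          exact sum_le_sum hper
        have hrhs : ∑ A ∈ powersetCard (s+1) (univ : Finset G), ∑ y ∈ A, (bfun P (A.erase y) y : ℝ)
            ≤ ((powersetCard (s+1) (univ : Finset G)).card : ℝ) * ((k : ℝ) * P.card) := by
          rw [← nsmul_eq_mul, ← sum_const]
          apply sum_le_sum
          intro A _
          have := upperB P k hVC A
          calc ∑ y ∈ A, (bfun P (A.erase y) y : ℝ)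
              = ((∑ y ∈ A, bfun P (A.erase y) y : ℕ) : ℝ) := by rw [Nat.cast_sum]
            _ ≤ ((k * P.card : ℕ) : ℝ) := by exact_mod_cast this
            _ = (k : ℝ) * P.card := by push_cast; ring
        have hcomb : ((n.choose s : ℕ) : ℝ) * (δ * n / 2 * ((P.card : ℝ) / 2))
            ≤ ((n.choose (s+1) : ℕ) : ℝ) * ((k : ℝ) * P.card) := by
          have e1 : (powersetCard s (univ : Finset G)).card = n.choose s := by
            rw [card_powersetCard, card_univ]
          have e2 : (powersetCard (s+1) (univ : Finset G)).card = n.choose (s+1) := by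
            rw [card_powersetCard, card_univ]
          rw [← e1, ← e2]
          calc ((powersetCard s (univ : Finset G)).card : ℝ) * (δ * n / 2 * ((P.card : ℝ) / 2))
              ≤ ∑ S ∈ powersetCard s (univ : Finset G), ∑ y ∈ Sᶜ, (bfun P S y : ℝ) := hlhs
            _ = ∑ A ∈ powersetCard (s+1) (univ : Finset G),
                ∑ y ∈ A, (bfun P (A.erase y) y : ℝ) := exchange P s
            _ ≤ _ := hrhs
        -- choose relation
        have echoose : ((n.choose (s+1) : ℕ) : ℝ) * (s+1) ≤ ((n.choose s : ℕ) : ℝ) * n := by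
          have h := Nat.choose_succ_right_eq n s
          have h2 : n.choose (s+1) * (s+1) ≤ n.choose s * n := by
            rw [h]
            exact Nat.mul_le_mul_left _ (Nat.sub_le n s)
          exact_mod_cast h2
        have hchoosepos : (0:ℝ) < ((n.choose s : ℕ) : ℝ) := by
          exact_mod_cast Nat.choose_pos hsn
        have hδs : 4 * (k:ℝ) < δ * (s+1) := by
          have : (4 * k : ℝ) ≤ δ * s := by
            rw [← div_le_iff₀' hδ0]
            exact hs4
          nlinarith
        -- derive contradiction
        have hs1pos : (0:ℝ) < (s:ℝ) + 1 := by positivity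
        have hkm : (0:ℝ) ≤ (k:ℝ) * P.card :=
          mul_nonneg (Nat.cast_nonneg _) (le_of_lt hmpos)
        nlinarith [mul_le_mul_of_nonneg_right hcomb (le_of_lt hs1pos),
          mul_le_mul_of_nonneg_right echoose hkm,
          mul_pos hchoosepos (mul_pos hnpos hmpos), hδs, hmpos, hnpos, hchoosepos]
      obtain ⟨S, hS, hhalf⟩ := hex
      have hScard : S.card = s := (mem_powersetCard_univ.1 hS)
      have hτ : (P.image (· ∩ S)).card ≤ ∑ i ∈ Finset.range (k+1), s.choose i := by
        have hQ : ∀ f ∈ P.image (· ∩ S), f ⊆ S := by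
          intro f hf
          rw [mem_image] at hf
          obtain ⟨g, _, rfl⟩ := hf
          exact inter_subset_right
        have hVCQ : ∀ u, (P.image (· ∩ S)).Shatters u → u.card ≤ k := by
          intro u hu
          have huS : u ⊆ S := by
            obtain ⟨v, hv, huv⟩ := hu.exists_superset
            exact huv.trans (hQ v hv)
          refine hVC u ?_
          intro t ht
          obtain ⟨v, hv, hvt⟩ := hu ht
          rw [mem_image] at hv
          obtain ⟨g, hg, rfl⟩ := hv
          refine ⟨g, hg, ?_⟩
          rw [← hvt, inter_comm g S, ← inter_assoc, inter_eq_left.2 huS]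
        have := sauer_count (P.image (· ∩ S)) S k hQ hVCQ
        rwa [hScard] at this
      have : ((P.image (· ∩ S)).card : ℝ) ≤ ∑ i ∈ Finset.range (k+1), (s.choose i : ℝ) := by
        rw [← Nat.cast_sum]
        exact_mod_cast hτ
      linarith
    · -- s > n : direct Sauer
      push_neg at hsn
      have h1 : P.card ≤ ∑ i ∈ Finset.range (k+1), n.choose i := by
        have := sauer_count P (univ : Finset G) k (fun f _ => subset_univ f) hVC
        rwa [card_univ] at this
      have h2 : ∑ i ∈ Finset.range (k+1), n.choose i ≤ ∑ i ∈ Finset.range (k+1), s.choose i :=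
        sum_le_sum (fun i _ => Nat.choose_le_choose i (le_of_lt hsn))
      have : (P.card : ℝ) ≤ ∑ i ∈ Finset.range (k+1), (s.choose i : ℝ) := by
        rw [← Nat.cast_sum]
        exact_mod_cast le_trans h1 h2
      have hnn : (0:ℝ) ≤ ∑ i ∈ Finset.range (k+1), (s.choose i : ℝ) := by positivity
      linarith
  exact le_trans hmain (numeric k s δ hδ0 hk hks hs5)

end HausslerPacking

/-- Representation lemma relative to a subspace: if `A` has VC-dimension at most `k` relative
to `H`, there are `m ≤ (30/δ)^k` elements of `H` such that every translate of `A` by an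
element of `H` is δ-close to one of the corresponding translates. -/
theorem stmt_6 {G : Type*} [AddCommGroup G] [Fintype G] [DecidableEq G]
    (A : Finset G) (H : AddSubgroup G) (k : ℕ) (δ : ℝ) (hδ0 : 0 < δ) (hδ1 : δ < 1)
    (hVC : ¬ ∃ (x : Fin (k+1) → G) (y : Set (Fin (k+1)) → G),
      (∀ S, y S ∈ H) ∧
      ∀ (i : Fin (k+1)) (S : Set (Fin (k+1))), x i + y S ∈ (A : Set G) ↔ i ∈ S) :
    ∃ m : ℕ, (m : ℝ) ≤ (30 / δ) ^ k ∧
      ∃ h : Fin m → G, (∀ i, h i ∈ H) ∧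
        ∀ x ∈ H, ∃ i : Fin m,
          ((symmDiff (A.image (· - x)) (A.image (· - h i))).card : ℝ)
            ≤ δ * Fintype.card G := by
  classical
  have hn : (0:ℝ) < (Fintype.card G : ℝ) := by
    exact_mod_cast Fintype.card_pos_iff.2 ⟨(0 : G)⟩
  have hδn : (0:ℝ) < δ * (Fintype.card G : ℝ) := mul_pos hδ0 hn
  set HF : Finset G := Set.toFinset (H : Set G) with hHF
  have hHFmem : ∀ x : G, x ∈ HF ↔ x ∈ H := fun x => Set.mem_toFinset
  set tr : G → Finset G := fun y => A.image (· - y) with htr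
  set Sep : Finset G → Prop := fun T => ∀ x ∈ T, ∀ y ∈ T, x ≠ y →
    δ * (Fintype.card G) < ((symmDiff (tr x) (tr y)).card : ℝ) with hSepdef
  have hex : ∃ T ∈ HF.powerset.filter Sep, ∀ T' ∈ HF.powerset.filter Sep, T'.card ≤ T.card := by
    apply Finset.exists_max_image
    refine ⟨∅, mem_filter.2 ⟨empty_mem_powerset _, ?_⟩⟩
    intro x hx
    exact absurd hx (notMem_empty x)
  obtain ⟨T, hTmem, hTmax⟩ := hex
  have hTH : T ⊆ HF := mem_powerset.1 (mem_filter.1 hTmem).1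
  have hTsep : Sep T := (mem_filter.1 hTmem).2
  -- coverage
  have hcover : ∀ x ∈ HF, ∃ y ∈ T, ((symmDiff (tr x) (tr y)).card : ℝ)
      ≤ δ * (Fintype.card G) := by
    intro x hx
    by_contra hno
    push_neg at hno
    have hxT : x ∉ T := by
      intro hxT
      have h := hno x hxT
      rw [symmDiff_self] at h
      simp only [Finset.bot_eq_empty, card_empty, Nat.cast_zero] at h
      linarith
    have hSep' : Sep (insert x T) := by
      intro a ha b hb hab
      rcases mem_insert.1 ha with rfl | haT
      · rcases mem_insert.1 hb with rfl | hbT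
        · exact absurd rfl hab
        · exact hno b hbT
      · rcases mem_insert.1 hb with rfl | hbT
        · rw [symmDiff_comm]
          exact hno a haT
        · exact hTsep a haT b hbT hab
    have hmem' : insert x T ∈ HF.powerset.filter Sep :=
      mem_filter.2 ⟨mem_powerset.2 (insert_subset hx hTH), hSep'⟩
    have hle := hTmax _ hmem'
    rw [card_insert_of_notMem hxT] at hle
    omega
  -- the packing family
  set P := T.image tr with hP
  have hinj : ∀ a ∈ T, ∀ b ∈ T, tr a = tr b → a = b := by
    intro a ha b hb hab
    by_contra hne
    have h := hTsep a ha b hb hne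
    rw [hab, symmDiff_self] at h
    simp only [Finset.bot_eq_empty, card_empty, Nat.cast_zero] at h
    linarith
  have hPcard : P.card = T.card := card_image_of_injOn hinj
  have hsepP : ∀ f ∈ P, ∀ g ∈ P, f ≠ g →
      δ * (Fintype.card G) < ((symmDiff f g).card : ℝ) := by
    intro f hf g hg hfg
    rw [hP, mem_image] at hf hg
    obtain ⟨a, ha, rfl⟩ := hf
    obtain ⟨b, hb, rfl⟩ := hg
    exact hTsep a ha b hb (fun h => hfg (h ▸ rfl))
  have hVCP : ∀ u, P.Shatters u → u.card ≤ k := by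
    intro u hu
    by_contra hlt
    push_neg at hlt
    obtain ⟨u', hu'sub, hu'card⟩ := Finset.exists_subset_card_eq (s := u) (n := k+1) hlt
    have hshat : P.Shatters u' := Finset.Shatters.mono_right hu'sub hu
    set xfun : Fin (k+1) → G := fun i => ((u'.equivFin.symm (Fin.cast hu'card.symm i)) : G)
      with hxfun
    have hxmem : ∀ i, xfun i ∈ u' := fun i => (u'.equivFin.symm (Fin.cast hu'card.symm i)).2
    have hxinj : Function.Injective xfun := by
      intro i j hij
      have h2 : u'.equivFin.symm (Fin.cast hu'card.symm i)
          = u'.equivFin.symm (Fin.cast hu'card.symm j) := Subtype.ext hij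
      have h3 := u'.equivFin.symm.injective h2
      have h4 : (Fin.cast hu'card.symm i : Fin u'.card).val = (Fin.cast hu'card.symm j).val := by
        rw [h3]
      exact Fin.ext h4
    have hall : ∀ S : Set (Fin (k+1)), ∃ y : G, y ∈ H ∧
        ∀ i : Fin (k+1), (xfun i + y ∈ (A : Set G) ↔ i ∈ S) := by
      intro S
      set tS : Finset G := ((univ : Finset (Fin (k+1))).filter (fun i => i ∈ S)).image xfun
        with htS
      have htSsub : tS ⊆ u' := by
        intro a ha
        rw [htS, mem_image] at ha
        obtain ⟨i, _, rfl⟩ := ha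
        exact hxmem i
      obtain ⟨v, hvP, hvt⟩ := hshat htSsub
      rw [hP, mem_image] at hvP
      obtain ⟨y, hyT, rfl⟩ := hvP
      refine ⟨y, (hHFmem y).1 (hTH hyT), ?_⟩
      intro i
      have hiff1 : xfun i ∈ tr y ↔ xfun i + y ∈ A := by
        rw [htr]
        simp only [Finset.mem_image]
        constructor
        · rintro ⟨a, haA, haeq⟩
          have : a = xfun i + y := eq_add_of_sub_eq haeq
          rwa [← this]
        · intro hmem
          exact ⟨xfun i + y, hmem, add_sub_cancel_right _ _⟩
      have hiff2 : xfun i ∈ tr y ↔ xfun i ∈ tS := by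
        constructor
        · intro hmem
          have : xfun i ∈ u' ∩ tr y := mem_inter.2 ⟨hxmem i, hmem⟩
          rw [hvt] at this
          exact this
        · intro hmem
          have : xfun i ∈ u' ∩ tr y := by
            rw [hvt]
            exact hmem
          exact (mem_inter.1 this).2
      have hiff3 : xfun i ∈ tS ↔ i ∈ S := by
        rw [htS, mem_image]
        constructor
        · rintro ⟨j, hj, hji⟩
          have : j = i := hxinj hji
          rw [← this]
          exact (mem_filter.1 hj).2
        · intro hiS
          exact ⟨i, mem_filter.2 ⟨mem_univ i, hiS⟩, rfl⟩
      rw [Finset.mem_coe, ← hiff1, hiff2, hiff3]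
    choose yfun hyH hyiff using hall
    exact hVC ⟨xfun, yfun, hyH, fun i S => hyiff S i⟩
  have hpack : (P.card : ℝ) ≤ (30 / δ) ^ k := packing k δ hδ0 hδ1 P hsepP hVCP
  refine ⟨T.card, by rw [← hPcard]; exact_mod_cast hpack, ?_⟩
  refine ⟨fun i => ((T.equivFin.symm i : {x // x ∈ T}) : G), ?_, ?_⟩
  · intro i
    exact (hHFmem _).1 (hTH (T.equivFin.symm i).2)
  · intro x hx
    obtain ⟨y, hyT, hyd⟩ := hcover x ((hHFmem x).2 hx)
    refine ⟨T.equivFin ⟨y, hyT⟩, ?_⟩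
    simp only [Equiv.symm_apply_apply]
    exact hyd
end

section
/- Let V be the F_p-vector space of n×n matrices over F_p. Let N_c (c ∈ Θ) be matrices each of rank n, let Q_1,…,Q_{q'} be matrices, and suppose for each c ∈ Θ there exist scalars ρ_c ≠ 0 and λ_1^c,…,λ_{q'}^c ∈ F_p with rank(ρ_c N_c + Σ_i λ_i^c Q_i) < r, where r ≤ n and any nonzero F_p-linear combination of the N_c (c ∈ Θ) has rank n. Then the set S = {Σ_{i=1}^{q'} λ_i^c Q_i : c ∈ Θ} is linearly independent in V, and consequently |Θ| ≤ q'. -/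
open Module

lemma rank_smul_le' {p : ℕ} [Fact p.Prime] {n : ℕ} (c : ZMod p)
    (A : Matrix (Fin n) (Fin n) (ZMod p)) : (c • A).rank ≤ A.rank := by
  have h : (c • A).mulVecLin = c • A.mulVecLin := by
    ext v i
    simp [Matrix.mulVecLin_apply, Matrix.smul_mulVec]
  have hle : LinearMap.range (c • A).mulVecLin ≤ LinearMap.range A.mulVecLin := by
    rw [h]
    rintro x ⟨v, rfl⟩
    exact Submodule.smul_mem _ c ⟨v, rfl⟩
  exact Submodule.finrank_mono hle

lemma rank_add_le' {p : ℕ} [Fact p.Prime] {n : ℕ}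
    (A B : Matrix (Fin n) (Fin n) (ZMod p)) : (A + B).rank ≤ A.rank + B.rank := by
  have h : LinearMap.range (A + B).mulVecLin ≤
      LinearMap.range A.mulVecLin ⊔ LinearMap.range B.mulVecLin := by
    rw [Matrix.mulVecLin_add]
    rintro x ⟨v, rfl⟩
    exact Submodule.mem_sup.2 ⟨A.mulVecLin v, ⟨v, rfl⟩, B.mulVecLin v, ⟨v, rfl⟩, rfl⟩
  calc (A + B).rank ≤ finrank (ZMod p)
        (LinearMap.range A.mulVecLin ⊔ LinearMap.range B.mulVecLin : Submodule _ _) :=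
        Submodule.finrank_mono h
    _ ≤ A.rank + B.rank := Submodule.finrank_add_le_finrank_add_finrank _ _

lemma rank_sum_le' {p : ℕ} [Fact p.Prime] {n : ℕ} {ι : Type*} (s : Finset ι)
    (f : ι → Matrix (Fin n) (Fin n) (ZMod p)) :
    (∑ c ∈ s, f c).rank ≤ ∑ c ∈ s, (f c).rank := by
  classical
  induction s using Finset.induction with
  | empty => simp
  | insert _ _ hx ih =>
    rw [Finset.sum_insert hx, Finset.sum_insert hx]
    exact (rank_add_le' _ _).trans (by omega)

/-- Linear independence of the quadratic combinations in the lower-bound construction,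
and the consequent bound `|Θ| ≤ q'`. -/
theorem stmt_13 (p n r q' : ℕ) [Fact p.Prime] {Θ : Type*} [Fintype Θ]
    (N : Θ → Matrix (Fin n) (Fin n) (ZMod p))
    (Q : Fin q' → Matrix (Fin n) (Fin n) (ZMod p))
    (ρ : Θ → ZMod p) (hρ : ∀ c, ρ c ≠ 0) (lam : Θ → Fin q' → ZMod p)
    (hr : r ≤ n) (hcard : Fintype.card Θ * r ≤ n)
    (hNrank : ∀ c, (N c).rank = n)
    (hlow : ∀ c, (ρ c • N c + ∑ i, lam c i • Q i).rank < r)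
    (hN : ∀ μ : Θ → ZMod p, μ ≠ 0 → (∑ c, μ c • N c).rank = n) :
    LinearIndependent (ZMod p) (fun c : Θ => ∑ i, lam c i • Q i) ∧
      Fintype.card Θ ≤ q' := by
  classical
  set M : Θ → Matrix (Fin n) (Fin n) (ZMod p) :=
    fun c => ρ c • N c + ∑ i, lam c i • Q i with hM
  have hli : LinearIndependent (ZMod p) (fun c : Θ => ∑ i, lam c i • Q i) := by
    rw [Fintype.linearIndependent_iff]
    intro μ hμ
    by_contra hne
    push_neg at hne
    obtain ⟨c₀, hc₀⟩ := hne
    have hμne : μ ≠ 0 := fun h => hc₀ (by simp [h])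
    -- the key identity
    have key : (∑ c, μ c • M c) = ∑ c, (μ c * ρ c) • N c := by
      simp only [hM, smul_add, Finset.sum_add_distrib, mul_smul]
      have : (∑ c, μ c • ∑ i, lam c i • Q i) = 0 := hμ
      rw [this, add_zero]
    have hμρ : (fun c => μ c * ρ c) ≠ 0 := by
      intro h
      have := congrFun h c₀
      simp only [Pi.zero_apply, mul_eq_zero] at this
      exact this.elim hc₀ (hρ c₀)
    have hrankn : (∑ c, μ c • M c).rank = n := by
      rw [key]; exact hN _ hμρ
    have hΘpos : 1 ≤ Fintype.card Θ := Fintype.card_pos_iff.2 ⟨c₀⟩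
    have hrpos : 1 ≤ r := lt_of_le_of_lt (Nat.zero_le _) (hlow c₀)
    have hbound : (∑ c, μ c • M c).rank < n := by
      have h1 : (∑ c, μ c • M c).rank ≤ ∑ c : Θ, (μ c • M c).rank :=
        rank_sum_le' _ _
      have h2 : ∀ c : Θ, (μ c • M c).rank ≤ r - 1 := by
        intro c
        have := (rank_smul_le' (μ c) (M c)).trans_lt (hlow c)
        omega
      have h3 : (∑ c : Θ, (μ c • M c).rank) ≤ Fintype.card Θ * (r - 1) := by
        calc (∑ c : Θ, (μ c • M c).rank) ≤ ∑ _c : Θ, (r - 1) :=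
              Finset.sum_le_sum fun c _ => h2 c
          _ = Fintype.card Θ * (r - 1) := by
              rw [Finset.sum_const, Finset.card_univ, smul_eq_mul]
      have : Fintype.card Θ * (r - 1) < n := by
        have : Fintype.card Θ * (r - 1) + Fintype.card Θ = Fintype.card Θ * r := by
          rw [← Nat.mul_succ]; congr 1; omega
        omega
      omega
    omega
  refine ⟨hli, ?_⟩
  -- factor through Fintype.linearCombination
  have hcomp : (fun c : Θ => ∑ i, lam c i • Q i) =
      (Fintype.linearCombination (ZMod p) Q) ∘ lam := by
    funext c
    simp [Fintype.linearCombination_apply]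
  rw [hcomp] at hli
  have hlam : LinearIndependent (ZMod p) lam := LinearIndependent.of_comp _ hli
  have := hlam.fintype_card_le_finrank
  simpa using this
end

section
/- Let G = F_p^n, let B = (L, Q) be a quadratic factor of complexity (ℓ, q) whose atoms each have size (1 ± μ/2)p^{n−ℓ−q}, let A ⊆ G, and suppose the reduced coloring sets satisfy |A_2| ≤ ε p^{ℓ+q} (almost ε-homogeneity) and there are unions Y_0, Y_1 of atoms of a partition R of the label space F_p^{ℓ+q} with |A_1 Δ Y_1| ≤ μ p^{ℓ+q} and |A_0 Δ Y_0| ≤ μ p^{ℓ+q}, where 0 < ε < μ/4 < 1/12. Let Y = ⋃_{d ∈ Y_1} B(d) ⊆ G (the pullback). Then |A Δ Y| ≤ 4μ|G|. -/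
set_option maxHeartbeats 1000000


open Classical in
/-- Pullbacks preserve approximations: if the reduced coloring of `A` with respect to a
quadratic factor (abstracted as a partition into atoms of near-equal size) is well
approximated in configuration space, then `A` is well approximated by the pullback. -/
theorem stmt_17 (p n ℓ q : ℕ) [Fact p.Prime] (hn : ℓ + q ≤ n) (μ ε : ℝ)
    (hε0 : 0 < ε) (hεμ : ε < μ/4) (hμ : μ < 1/3)
    (B : (Fin (ℓ+q) → ZMod p) → Finset (Fin n → ZMod p))
    (hpart : ∀ x : Fin n → ZMod p, ∃! d : Fin (ℓ+q) → ZMod p, x ∈ B d)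
    (hsize : ∀ d, |((B d).card : ℝ) - (p:ℝ)^(n-ℓ-q)| ≤ (μ/2) * (p:ℝ)^(n-ℓ-q))
    (A : Finset (Fin n → ZMod p))
    (hA2 : ((Finset.univ.filter (fun d : Fin (ℓ+q) → ZMod p =>
        ¬ (((A ∩ B d).card : ℝ) ≤ ε * (B d).card) ∧
        ¬ ((1-ε) * (B d).card ≤ ((A ∩ B d).card : ℝ)))).card : ℝ) ≤ ε * (p:ℝ)^(ℓ+q))
    (Y0 Y1 : Finset (Fin (ℓ+q) → ZMod p))
    (hY0 : ((symmDiff (Finset.univ.filter (fun d : Fin (ℓ+q) → ZMod p =>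
        ((A ∩ B d).card : ℝ) ≤ ε * (B d).card)) Y0).card : ℝ) ≤ μ * (p:ℝ)^(ℓ+q))
    (hY1 : ((symmDiff (Finset.univ.filter (fun d : Fin (ℓ+q) → ZMod p =>
        (1-ε) * (B d).card ≤ ((A ∩ B d).card : ℝ))) Y1).card : ℝ) ≤ μ * (p:ℝ)^(ℓ+q)) :
    ((symmDiff A (Y1.biUnion B)).card : ℝ) ≤ 4 * μ * (p:ℝ)^n := by
  classical
  have hμ0 : 0 < μ := by linarith
  have hp0 : (0:ℝ) < p := by exact_mod_cast (Fact.out : p.Prime).pos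
  set M : ℝ := (p:ℝ)^(n-ℓ-q) with hMdef
  have hMpos : 0 < M := by positivity
  set P : ℝ := (p:ℝ)^(ℓ+q) with hPdef
  have hPpos : 0 < P := by positivity
  have hMP : P * M = (p:ℝ)^n := by
    rw [hPdef, hMdef, ← pow_add]
    congr 1
    omega
  have hcardU : ((Finset.univ : Finset (Fin (ℓ+q) → ZMod p)).card : ℝ) = P := by
    rw [Finset.card_univ, Fintype.card_fun, ZMod.card, Fintype.card_fin]
    push_cast [hPdef]; ring
  have hBle : ∀ d, ((B d).card : ℝ) ≤ (1+μ/2)*M := by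
    intro d
    have := (abs_le.mp (hsize d)).2
    nlinarith
  -- disjointness of atoms
  have hdisj : ∀ d d', d ≠ d' → Disjoint (B d) (B d') := by
    intro d d' h
    rw [Finset.disjoint_left]
    intro x hx hx'
    obtain ⟨e, _, hu⟩ := hpart x
    exact h ((hu d hx).trans (hu d' hx').symm)
  have hcover : ∀ x, ∃ d, x ∈ B d := fun x => ⟨(hpart x).choose, (hpart x).choose_spec.1⟩
  have hsum : ∀ S : Finset (Fin n → ZMod p), S.card = ∑ d, (S ∩ B d).card := by
    intro S
    have hS : S = Finset.univ.biUnion (fun d => S ∩ B d) := by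
      ext x
      simp only [Finset.mem_biUnion, Finset.mem_inter, Finset.mem_univ, true_and]
      constructor
      · intro hx; obtain ⟨d, hd⟩ := hcover x; exact ⟨d, hx, hd⟩
      · rintro ⟨d, hx, _⟩; exact hx
    nth_rewrite 1 [hS]
    exact Finset.card_biUnion (fun d _ d' _ h =>
      (hdisj d d' h).mono Finset.inter_subset_right Finset.inter_subset_right)
  set Y : Finset (Fin n → ZMod p) := Y1.biUnion B with hYdef
  -- membership in Y
  have hYmem : ∀ d x, x ∈ B d → (x ∈ Y ↔ d ∈ Y1) := by
    intro d x hx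
    constructor
    · intro hxY
      rw [hYdef, Finset.mem_biUnion] at hxY
      obtain ⟨e, he, hxe⟩ := hxY
      obtain ⟨f, _, hu⟩ := hpart x
      rwa [(hu d hx).trans (hu e hxe).symm]
    · intro hd
      exact Finset.mem_biUnion.mpr ⟨d, hd, hx⟩
  have hAY : ∀ d, (A \ Y) ∩ B d = if d ∈ Y1 then ∅ else A ∩ B d := by
    intro d
    split_ifs with h
    · ext x
      simp only [Finset.mem_inter, Finset.mem_sdiff, Finset.notMem_empty, iff_false]
      rintro ⟨⟨_, hxY⟩, hxB⟩
      exact hxY ((hYmem d x hxB).mpr h)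
    · ext x
      simp only [Finset.mem_inter, Finset.mem_sdiff]
      constructor
      · rintro ⟨⟨hxA, _⟩, hxB⟩; exact ⟨hxA, hxB⟩
      · rintro ⟨hxA, hxB⟩
        exact ⟨⟨hxA, fun hxY => h ((hYmem d x hxB).mp hxY)⟩, hxB⟩
  have hYA : ∀ d, (Y \ A) ∩ B d = if d ∈ Y1 then B d \ A else ∅ := by
    intro d
    split_ifs with h
    · ext x
      simp only [Finset.mem_inter, Finset.mem_sdiff]
      constructor
      · rintro ⟨⟨_, hxA⟩, hxB⟩; exact ⟨hxB, hxA⟩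
      · rintro ⟨hxB, hxA⟩
        exact ⟨⟨(hYmem d x hxB).mpr h, hxA⟩, hxB⟩
    · ext x
      simp only [Finset.mem_inter, Finset.mem_sdiff, Finset.notMem_empty, iff_false]
      rintro ⟨⟨hxY, _⟩, hxB⟩
      exact h ((hYmem d x hxB).mp hxY)
  -- card decomposition
  have hcard1 : (A \ Y).card = ∑ d ∈ Y1ᶜ, (A ∩ B d).card := by
    rw [hsum (A \ Y), ← Finset.sum_add_sum_compl Y1]
    have h1 : ∑ d ∈ Y1, ((A \ Y) ∩ B d).card = 0 :=
      Finset.sum_eq_zero (fun d hd => by rw [hAY d, if_pos hd, Finset.card_empty])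
    have h2 : ∑ d ∈ Y1ᶜ, ((A \ Y) ∩ B d).card = ∑ d ∈ Y1ᶜ, (A ∩ B d).card :=
      Finset.sum_congr rfl (fun d hd => by rw [hAY d, if_neg (Finset.mem_compl.mp hd)])
    rw [h1, h2, zero_add]
  have hcard2 : (Y \ A).card = ∑ d ∈ Y1, (B d \ A).card := by
    rw [hsum (Y \ A), ← Finset.sum_add_sum_compl Y1]
    have h1 : ∑ d ∈ Y1ᶜ, ((Y \ A) ∩ B d).card = 0 :=
      Finset.sum_eq_zero (fun d hd => by
        rw [hYA d, if_neg (Finset.mem_compl.mp hd), Finset.card_empty])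
    have h2 : ∑ d ∈ Y1, ((Y \ A) ∩ B d).card = ∑ d ∈ Y1, (B d \ A).card :=
      Finset.sum_congr rfl (fun d hd => by rw [hYA d, if_pos hd])
    rw [h1, h2, add_zero]
  have hsymm : (symmDiff A Y).card = (A \ Y).card + (Y \ A).card := by
    rw [symmDiff_def]
    exact Finset.card_union_of_disjoint (disjoint_sdiff_sdiff)
  set A0 := Finset.univ.filter (fun d : Fin (ℓ+q) → ZMod p =>
      ((A ∩ B d).card : ℝ) ≤ ε * (B d).card) with hA0def
  set A1 := Finset.univ.filter (fun d : Fin (ℓ+q) → ZMod p =>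
      (1-ε) * (B d).card ≤ ((A ∩ B d).card : ℝ)) with hA1def
  -- bound Sum2 : ∑ d in Y1ᶜ, card (A ∩ B d)
  have hbound2 : (∑ d ∈ Y1ᶜ, ((A ∩ B d).card : ℝ)) ≤
      ε * (1+μ/2) * M * P + (1+μ/2) * M * ((ε + μ) * P) := by
    rw [← Finset.sum_filter_add_sum_filter_not Y1ᶜ (· ∈ A0)]
    gcongr ?_ + ?_
    · calc (∑ d ∈ Y1ᶜ.filter (· ∈ A0), ((A ∩ B d).card : ℝ))
          ≤ ∑ _d ∈ Y1ᶜ.filter (· ∈ A0), ε * ((1+μ/2) * M) := by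
            apply Finset.sum_le_sum
            intro d hd
            have hd0 : d ∈ A0 := (Finset.mem_filter.mp hd).2
            rw [hA0def, Finset.mem_filter] at hd0
            have h1 := hd0.2
            have h2 := hBle d
            nlinarith
        _ = (Y1ᶜ.filter (· ∈ A0)).card * (ε * ((1+μ/2) * M)) := by
            rw [Finset.sum_const, nsmul_eq_mul]
        _ ≤ P * (ε * ((1+μ/2) * M)) := by
            apply mul_le_mul_of_nonneg_right _ (by positivity)
            rw [← hcardU]
            exact_mod_cast Finset.card_le_univ _
        _ = ε * (1+μ/2) * M * P := by ring
    · have hsub : Y1ᶜ.filter (· ∉ A0) ⊆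
          (Finset.univ.filter (fun d : Fin (ℓ+q) → ZMod p =>
            ¬ (((A ∩ B d).card : ℝ) ≤ ε * (B d).card) ∧
            ¬ ((1-ε) * (B d).card ≤ ((A ∩ B d).card : ℝ)))) ∪ (symmDiff A1 Y1) := by
        intro d hd
        rw [Finset.mem_filter, Finset.mem_compl] at hd
        obtain ⟨hdY, hdA0⟩ := hd
        rw [hA0def, Finset.mem_filter] at hdA0
        push_neg at hdA0
        have hd0 : ¬ ((A ∩ B d).card : ℝ) ≤ ε * (B d).card := not_le.mpr (hdA0 (Finset.mem_univ d))
        by_cases hd1 : (1-ε) * (B d).card ≤ ((A ∩ B d).card : ℝ)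
        · apply Finset.mem_union_right
          rw [symmDiff_def, Finset.sup_eq_union, Finset.mem_union]
          left
          rw [Finset.mem_sdiff, hA1def, Finset.mem_filter]
          exact ⟨⟨Finset.mem_univ d, hd1⟩, hdY⟩
        · apply Finset.mem_union_left
          rw [Finset.mem_filter]
          exact ⟨Finset.mem_univ d, hd0, hd1⟩
      have hcardb : ((Y1ᶜ.filter (· ∉ A0)).card : ℝ) ≤ (ε + μ) * P := by
        calc ((Y1ᶜ.filter (· ∉ A0)).card : ℝ)
            ≤ (((Finset.univ.filter (fun d : Fin (ℓ+q) → ZMod p =>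
              ¬ (((A ∩ B d).card : ℝ) ≤ ε * (B d).card) ∧
              ¬ ((1-ε) * (B d).card ≤ ((A ∩ B d).card : ℝ)))) ∪ (symmDiff A1 Y1)).card : ℝ) := by
              exact_mod_cast Finset.card_le_card hsub
          _ ≤ _ + _ := by exact_mod_cast Finset.card_union_le _ _
          _ ≤ ε * P + μ * P := add_le_add hA2 hY1
          _ = (ε + μ) * P := by ring
      calc (∑ d ∈ Y1ᶜ.filter (· ∉ A0), ((A ∩ B d).card : ℝ))
          ≤ ∑ d ∈ Y1ᶜ.filter (· ∉ A0), (1+μ/2) * M := by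
            apply Finset.sum_le_sum
            intro d _
            calc ((A ∩ B d).card : ℝ) ≤ ((B d).card : ℝ) := by
                  exact_mod_cast Finset.card_le_card Finset.inter_subset_right
              _ ≤ (1+μ/2) * M := hBle d
        _ = (Y1ᶜ.filter (· ∉ A0)).card * ((1+μ/2) * M) := by
            rw [Finset.sum_const, nsmul_eq_mul]
        _ ≤ ((ε + μ) * P) * ((1+μ/2) * M) := by
            apply mul_le_mul_of_nonneg_right hcardb (by positivity)
        _ = (1+μ/2) * M * ((ε + μ) * P) := by ring
  -- bound Sum1 : ∑ d in Y1, card (B d \ A)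
  have hbound1 : (∑ d ∈ Y1, ((B d \ A).card : ℝ)) ≤
      ε * (1+μ/2) * M * P + (1+μ/2) * M * (μ * P) := by
    rw [← Finset.sum_filter_add_sum_filter_not Y1 (· ∈ A1)]
    gcongr ?_ + ?_
    · calc (∑ d ∈ Y1.filter (· ∈ A1), ((B d \ A).card : ℝ))
          ≤ ∑ _d ∈ Y1.filter (· ∈ A1), ε * ((1+μ/2) * M) := by
            apply Finset.sum_le_sum
            intro d hd
            have hd1 : d ∈ A1 := (Finset.mem_filter.mp hd).2
            rw [hA1def, Finset.mem_filter] at hd1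
            have h1 := hd1.2
            have h2 := hBle d
            have heq : (B d \ A).card = (B d).card - (A ∩ B d).card := by
              rw [Finset.inter_comm, ← Finset.sdiff_inter_self_left]
              exact Finset.card_sdiff_of_subset Finset.inter_subset_left
            have hle : (A ∩ B d).card ≤ (B d).card :=
              Finset.card_le_card Finset.inter_subset_right
            have : ((B d \ A).card : ℝ) = ((B d).card : ℝ) - ((A ∩ B d).card : ℝ) := by
              rw [heq]; push_cast [hle]; ring
            nlinarith
        _ = (Y1.filter (· ∈ A1)).card * (ε * ((1+μ/2) * M)) := by
            rw [Finset.sum_const, nsmul_eq_mul]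
        _ ≤ P * (ε * ((1+μ/2) * M)) := by
            apply mul_le_mul_of_nonneg_right _ (by positivity)
            rw [← hcardU]
            exact_mod_cast Finset.card_le_univ _
        _ = ε * (1+μ/2) * M * P := by ring
    · have hsub : Y1.filter (· ∉ A1) ⊆ symmDiff A1 Y1 := by
        intro d hd
        rw [Finset.mem_filter] at hd
        rw [symmDiff_def, Finset.sup_eq_union, Finset.mem_union]
        right
        exact Finset.mem_sdiff.mpr ⟨hd.1, hd.2⟩
      have hcardb : ((Y1.filter (· ∉ A1)).card : ℝ) ≤ μ * P :=
        le_trans (by exact_mod_cast Finset.card_le_card hsub) hY1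
      calc (∑ d ∈ Y1.filter (· ∉ A1), ((B d \ A).card : ℝ))
          ≤ ∑ d ∈ Y1.filter (· ∉ A1), (1+μ/2) * M := by
            apply Finset.sum_le_sum
            intro d _
            calc ((B d \ A).card : ℝ) ≤ ((B d).card : ℝ) := by
                  exact_mod_cast Finset.card_le_card (Finset.sdiff_subset)
              _ ≤ (1+μ/2) * M := hBle d
        _ = (Y1.filter (· ∉ A1)).card * ((1+μ/2) * M) := by
            rw [Finset.sum_const, nsmul_eq_mul]
        _ ≤ (μ * P) * ((1+μ/2) * M) := by
            apply mul_le_mul_of_nonneg_right hcardb (by positivity)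
        _ = (1+μ/2) * M * (μ * P) := by ring
  -- put together
  have hfinal : ((symmDiff A Y).card : ℝ) =
      (∑ d ∈ Y1ᶜ, ((A ∩ B d).card : ℝ)) + (∑ d ∈ Y1, ((B d \ A).card : ℝ)) := by
    rw [hsymm, hcard1, hcard2]
    push_cast
    ring
  rw [hfinal]
  have hPn : (0:ℝ) < (p:ℝ)^n := by positivity
  have := add_le_add hbound2 hbound1
  rw [← hMP]
  nlinarith [mul_pos hPpos hMpos, mul_pos (mul_pos hPpos hMpos) hμ0,
    mul_pos (mul_pos hPpos hMpos) hε0]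
end
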